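/- arXiv:2112.13332 — 6 statements merged into one kernel-verified Lean document; each statement's English description precedes it below -/
import Mathlib

section
/- Let γ := (1+√37)/3 (the positive root of 3γ² − 2γ − 12 = 0), let a, μ > 0, let N be a real number with log N ≥ 7.4, and set α := γ·√(aμ·log N). Let B be a nonnegative random variable such that P(B ≥ t) ≤ 2N·exp(−(log N/α)·t) for all t ≥ α. Then E[B] ≤ 3·√(aμ·log N). -/
open MeasureTheory ProbabilityTheory

lemma integral_exp_neg_mul_Ioi_zero {c : ℝ} (hc : 0 < c) :
    ∫ x in Set.Ioi (0:ℝ), Real.exp (-(c * x)) = 1 / c := by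
  have := integral_comp_mul_left_Ioi (fun x => Real.exp (-x)) 0 hc
  simp only [mul_zero] at this
  rw [this, integral_exp_neg_Ioi_zero]
  simp [one_div]

/-- Let `γ = (1+√37)/3`, `a, μ > 0`, `log N ≥ 7.4`, and
`α = γ·√(aμ·log N)`. If a nonnegative random variable `B` satisfies the tail bound
`P(B ≥ t) ≤ 2N·exp(−(log N/α)·t)` for all `t ≥ α`, then `E[B] ≤ 3√(aμ·log N)`. -/
theorem expectation_bound_from_tail
    {Ω : Type*} [MeasurableSpace Ω] (P : Measure Ω) [IsProbabilityMeasure P]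
    (a μ N : ℝ) (ha : 0 < a) (hμ : 0 < μ) (hN : 7.4 ≤ Real.log N)
    (γ α : ℝ) (hγ : γ = (1 + Real.sqrt 37) / 3)
    (hα : α = γ * Real.sqrt (a * μ * Real.log N))
    (B : Ω → ℝ) (hBmeas : Measurable B) (hBnn : ∀ ω, 0 ≤ B ω)
    (htail : ∀ t : ℝ, α ≤ t →
      (P {ω | t ≤ B ω}).toReal ≤ 2 * N * Real.exp (-(Real.log N / α) * t)) :
    ∫⁻ ω, ENNReal.ofReal (B ω) ∂P ≤
      ENNReal.ofReal (3 * Real.sqrt (a * μ * Real.log N)) := by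
  set L := Real.log N with hLdef
  have hL0 : 0 < L := by norm_num at hN ⊢; linarith
  have hs0 : 0 < Real.sqrt (a * μ * L) := Real.sqrt_pos.mpr (by positivity)
  have h37 : Real.sqrt 37 ^ 2 = 37 := Real.sq_sqrt (by norm_num)
  have h37nn : 0 ≤ Real.sqrt 37 := Real.sqrt_nonneg _
  have hγ0 : 0 < γ := by rw [hγ]; positivity
  have hα0 : 0 < α := by rw [hα]; positivity
  -- N is positive
  have hNpos : 0 < N := by
    have h := (htail α le_rfl).trans' ENNReal.toReal_nonneg
    have hexp : 0 < Real.exp (-(L / α) * α) := Real.exp_pos _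
    have hN0 : 0 ≤ N := by nlinarith
    rcases lt_or_eq_of_le hN0 with h' | h'
    · exact h'
    · exfalso; rw [← h', Real.log_zero] at hLdef; rw [hLdef] at hL0; linarith
  have hNe : N * Real.exp (-L) = 1 := by
    rw [Real.exp_neg, hLdef, Real.exp_log hNpos, mul_inv_cancel₀ hNpos.ne']
  set c : ℝ := L / α with hcdef
  have hc0 : 0 < c := div_pos hL0 hα0
  have hcα : c * α = L := div_mul_cancel₀ L hα0.ne'
  -- the truncated variable
  set g : Ω → ℝ := fun ω => max (B ω - α) 0 with hgdef
  have hgmeas : Measurable g := (hBmeas.sub measurable_const).max measurable_const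
  have hgnn : ∀ ω, 0 ≤ g ω := fun ω => le_max_right _ _
  -- layer cake bound on g
  have key : ∫⁻ ω, ENNReal.ofReal (g ω) ∂P ≤ ENNReal.ofReal (2 * α / L) := by
    rw [lintegral_eq_lintegral_meas_le P (Filter.Eventually.of_forall hgnn)
      hgmeas.aemeasurable]
    have step1 : ∫⁻ t in Set.Ioi (0:ℝ), P {ω | t ≤ g ω} ≤
        ∫⁻ t in Set.Ioi (0:ℝ), ENNReal.ofReal (2 * Real.exp (-(c * t))) := by
      apply setLIntegral_mono (by fun_prop) (fun t ht => ?_)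
      have ht0 : 0 < t := ht
      have hset : {ω | t ≤ g ω} = {ω | α + t ≤ B ω} := by
        ext ω
        simp only [Set.mem_setOf_eq, hgdef, le_max_iff]
        constructor
        · rintro (h | h) <;> [linarith; linarith]
        · intro h; left; linarith
      rw [hset]
      have hb := htail (α + t) (by linarith)
      rw [ENNReal.le_ofReal_iff_toReal_le (measure_ne_top P _) (by positivity)]
      calc (P {ω | α + t ≤ B ω}).toReal
          ≤ 2 * N * Real.exp (-(L / α) * (α + t)) := hb
        _ = 2 * Real.exp (-(c * t)) := by
            rw [← hcdef]
            have : -(c * (α + t)) = -L + -(c * t) := by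
              rw [mul_add, hcα]; ring
            rw [neg_mul, this, Real.exp_add]
            nlinarith [Real.exp_pos (-(c*t)), Real.exp_pos (-L)]
    refine step1.trans ?_
    have hint : IntegrableOn (fun t => 2 * Real.exp (-(c * t))) (Set.Ioi 0) := by
      have := (exp_neg_integrableOn_Ioi 0 hc0).const_mul 2
      simpa [neg_mul, IntegrableOn] using this
    rw [← ofReal_integral_eq_lintegral_ofReal hint
      (Filter.Eventually.of_forall (fun t => by positivity))]
    rw [MeasureTheory.integral_const_mul, integral_exp_neg_mul_Ioi_zero hc0]
    apply ENNReal.ofReal_le_ofReal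
    rw [hcdef]
    rw [one_div, inv_div, mul_div_assoc]
  -- combine
  have hBle : ∀ ω, B ω ≤ α + g ω := fun ω => by
    have := le_max_left (B ω - α) 0; simp only [hgdef]; linarith
  calc ∫⁻ ω, ENNReal.ofReal (B ω) ∂P
      ≤ ∫⁻ ω, (ENNReal.ofReal α + ENNReal.ofReal (g ω)) ∂P := by
        apply lintegral_mono (fun ω => ?_)
        rw [← ENNReal.ofReal_add hα0.le (hgnn ω)]
        exact ENNReal.ofReal_le_ofReal (hBle ω)
    _ = ENNReal.ofReal α + ∫⁻ ω, ENNReal.ofReal (g ω) ∂P := by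
        rw [lintegral_add_left measurable_const, lintegral_const, measure_univ, mul_one]
    _ ≤ ENNReal.ofReal α + ENNReal.ofReal (2 * α / L) := by gcongr
    _ = ENNReal.ofReal (α + 2 * α / L) := by
        rw [← ENNReal.ofReal_add hα0.le (by positivity)]
    _ ≤ ENNReal.ofReal (3 * Real.sqrt (a * μ * L)) := by
        apply ENNReal.ofReal_le_ofReal
        rw [hα]
        set s := Real.sqrt (a * μ * L)
        have h1 : γ * s * (2 / L) ≤ γ * s * (2 / 7.4) := by
          have : (2:ℝ) / L ≤ 2 / 7.4 := by
            apply div_le_div_of_nonneg_left (by norm_num) (by norm_num) hN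
          nlinarith
        have hγ3 : γ * (1 + 2 / 7.4) ≤ 3 := by
          rw [hγ]
          nlinarith
        have h3 : 2 * (γ * s) / L = γ * s * (2 / L) := by ring
        have h4 : γ * s + γ * s * (2 / 7.4) = γ * (1 + 2 / 7.4) * s := by ring
        have h5 : γ * (1 + 2 / 7.4) * s ≤ 3 * s :=
          mul_le_mul_of_nonneg_right hγ3 hs0.le
        linarith
end

section
/- Let γ := (1+√37)/3 (the positive root of 3γ² − 2γ − 12 = 0), let a, μ > 0, let N be a real number with log N ≥ 7.4, and set α := γ·√(aμ·log N). Let B be a nonnegative random variable such that P(B ≥ t) ≤ 2N·exp(−(log N/α)·t) for all t ≥ α. Then E[B²] ≤ 12·aμ·log N. -/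
open MeasureTheory ProbabilityTheory

open Set Filter


lemma exp_shift_integrableOn (k b : ℝ) (hk : 0 < k) :
    IntegrableOn (fun t : ℝ => Real.exp (-k * (t - b))) (Ioi b) := by
  have : (fun t : ℝ => Real.exp (-k * (t - b)))
      = fun t : ℝ => Real.exp (k * b) * Real.exp (-k * t) := by
    funext t; rw [← Real.exp_add]; ring_nf
  rw [this]
  exact (exp_neg_integrableOn_Ioi b hk).const_mul _

lemma exp_shift_integral (k b : ℝ) (hk : 0 < k) :
    ∫ t in Ioi b, Real.exp (-k * (t - b)) = 1 / k := by
  have hderiv : ∀ x ∈ Ioi b,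
      HasDerivAt (fun t : ℝ => -(1/k) * Real.exp (-k * (t - b)))
        (Real.exp (-k * (x - b))) x := by
    intro x _
    have h1 : HasDerivAt (fun t : ℝ => -k * (t - b)) (-k) x := by
      simpa using ((hasDerivAt_id x).sub_const b).const_mul (-k)
    have h2 := (h1.exp).const_mul (-(1/k))
    convert h2 using 1
    · rfl
    · rfl
    · field_simp
  have htend : Tendsto (fun t : ℝ => -(1/k) * Real.exp (-k * (t - b))) atTop (nhds 0) := by
    have : Tendsto (fun t : ℝ => -k * (t - b)) atTop atBot := by
      have h0 : Tendsto (fun t : ℝ => t - b) atTop atTop :=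
        tendsto_atTop_add_const_right _ _ tendsto_id
      have := (tendsto_const_mul_atTop_of_pos hk).mpr h0
      simpa [neg_mul] using tendsto_neg_atBot_iff.mpr this
    simpa using (Real.tendsto_exp_atBot.comp this).const_mul (-(1/k))
  have := integral_Ioi_of_hasDerivAt_of_tendsto
    (f := fun t : ℝ => -(1/k) * Real.exp (-k * (t - b)))
    (f' := fun t : ℝ => Real.exp (-k * (t - b))) ?_ hderiv
    (exp_shift_integrableOn k b hk) htend
  · rw [this]; simp
  · exact Continuous.continuousWithinAt (by continuity)

lemma lintegral_exp_shift (k b : ℝ) (hk : 0 < k) :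
    ∫⁻ t in Ioi b, ENNReal.ofReal (Real.exp (-k * (t - b))) = ENNReal.ofReal (1 / k) := by
  rw [← exp_shift_integral k b hk,
    ofReal_integral_eq_lintegral_ofReal (exp_shift_integrableOn k b hk)
      (Eventually.of_forall fun t => (Real.exp_pos _).le)]

lemma lintegral_id_Ioc (b : ℝ) (hb : 0 ≤ b) :
    ∫⁻ t in Ioc (0:ℝ) b, ENNReal.ofReal t = ENNReal.ofReal (b ^ 2 / 2) := by
  have hint : IntegrableOn (fun t : ℝ => t) (Ioc (0:ℝ) b) :=
    (continuous_id.integrableOn_Icc (a := (0:ℝ)) (b := b)).mono_set Ioc_subset_Icc_self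
  rw [← ofReal_integral_eq_lintegral_ofReal hint ?_]
  · congr 1
    rw [← intervalIntegral.integral_of_le hb]
    rw [integral_id]
    ring
  · filter_upwards [self_mem_ae_restrict (measurableSet_Ioc : MeasurableSet (Ioc (0:ℝ) b))]
      with t ht using ht.1.le
/-- Let `γ = (1+√37)/3`, `a, μ > 0`, `log N ≥ 7.4`, and
`α = γ·√(aμ·log N)`. If a nonnegative random variable `B` satisfies the tail bound
`P(B ≥ t) ≤ 2N·exp(−(log N/α)·t)` for all `t ≥ α`, then `E[B²] ≤ 12·aμ·log N`. -/
theorem second_moment_bound_from_tail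
    {Ω : Type*} [MeasurableSpace Ω] (P : Measure Ω) [IsProbabilityMeasure P]
    (a μ N : ℝ) (ha : 0 < a) (hμ : 0 < μ) (hN : 7.4 ≤ Real.log N)
    (γ α : ℝ) (hγ : γ = (1 + Real.sqrt 37) / 3)
    (hα : α = γ * Real.sqrt (a * μ * Real.log N))
    (B : Ω → ℝ) (hBmeas : Measurable B) (hBnn : ∀ ω, 0 ≤ B ω)
    (htail : ∀ t : ℝ, α ≤ t →
      (P {ω | t ≤ B ω}).toReal ≤ 2 * N * Real.exp (-(Real.log N / α) * t)) :
    ∫⁻ ω, ENNReal.ofReal ((B ω) ^ 2) ∂P ≤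
      ENNReal.ofReal (12 * (a * μ) * Real.log N) := by
  set L := Real.log N with hL
  have hL0 : (0:ℝ) < L := by linarith
  have hL1 : (1:ℝ) < L := by linarith
  have hNne : N ≠ 0 := by
    intro h
    rw [hL, h, Real.log_zero] at hL0
    exact lt_irrefl 0 hL0
  have hMpos : (0:ℝ) < |N| := abs_pos.mpr hNne
  have hexp : Real.exp L = |N| := by
    rw [hL, ← Real.log_abs]; exact Real.exp_log hMpos
  have haμL : (0:ℝ) < a * μ * L := mul_pos (mul_pos ha hμ) hL0
  have hs37 : Real.sqrt 37 ≤ 6.1 := by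
    nlinarith [Real.sq_sqrt (by norm_num : (0:ℝ) ≤ 37), Real.sqrt_nonneg 37]
  have hs37' : (0:ℝ) ≤ Real.sqrt 37 := Real.sqrt_nonneg 37
  have hγpos : 0 < γ := by rw [hγ]; positivity
  have hαpos : 0 < α := by
    rw [hα]; exact mul_pos hγpos (Real.sqrt_pos.mpr haμL)
  have hα2 : α ^ 2 = γ ^ 2 * (a * μ * L) := by
    rw [hα, mul_pow, Real.sq_sqrt haμL.le]
  -- layer cake
  have key := lintegral_rpow_eq_lintegral_meas_le_mul P
    (f := B) (Eventually.of_forall hBnn) hBmeas.aemeasurable (p := (2:ℝ)) (by norm_num)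
  have hpow : ∀ x : ℝ, x ^ (2:ℝ) = x ^ 2 := by
    intro x; rw [← Real.rpow_natCast x 2]; norm_num
  have hgoal_eq : ∫⁻ ω, ENNReal.ofReal ((B ω) ^ 2) ∂P
      = ENNReal.ofReal 2 * ∫⁻ t in Ioi (0:ℝ), P {ω | t ≤ B ω} * ENNReal.ofReal t := by
    simp_rw [← hpow]
    rw [key]
    congr 1
    apply lintegral_congr
    intro t
    norm_num
  rw [hgoal_eq]
  -- split the integral
  have hsplit : Ioi (0:ℝ) = Ioc 0 α ∪ Ioi α := (Ioc_union_Ioi_eq_Ioi hαpos.le).symm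
  rw [hsplit, lintegral_union measurableSet_Ioi (Ioc_disjoint_Ioi le_rfl)]
  -- part 1
  have h1 : ∫⁻ t in Ioc (0:ℝ) α, P {ω | t ≤ B ω} * ENNReal.ofReal t
      ≤ ENNReal.ofReal (α ^ 2 / 2) := by
    calc ∫⁻ t in Ioc (0:ℝ) α, P {ω | t ≤ B ω} * ENNReal.ofReal t
        ≤ ∫⁻ t in Ioc (0:ℝ) α, ENNReal.ofReal t := by
          apply lintegral_mono
          intro t
          calc P {ω | t ≤ B ω} * ENNReal.ofReal t ≤ 1 * ENNReal.ofReal t :=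
                mul_le_mul_left prob_le_one _
            _ = ENNReal.ofReal t := one_mul _
      _ = ENNReal.ofReal (α ^ 2 / 2) := lintegral_id_Ioc α hαpos.le
  -- part 2
  set k := (L - 1) / α with hk
  have hkpos : 0 < k := div_pos (by linarith) hαpos
  have h2 : ∫⁻ t in Ioi α, P {ω | t ≤ B ω} * ENNReal.ofReal t
      ≤ ENNReal.ofReal (2 * α ^ 2 / (L - 1)) := by
    have hpt : ∀ t ∈ Ioi α, P {ω | t ≤ B ω} * ENNReal.ofReal t
        ≤ ENNReal.ofReal (2 * α) * ENNReal.ofReal (Real.exp (-k * (t - α))) := by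
      intro t ht
      have htα : α ≤ t := (le_of_lt ht)
      have htpos : 0 < t := lt_trans hαpos ht
      have hP : P {ω | t ≤ B ω} ≤ ENNReal.ofReal (2 * |N| * Real.exp (-(L / α) * t)) := by
        rw [← ENNReal.ofReal_toReal (measure_ne_top P _)]
        apply ENNReal.ofReal_le_ofReal
        refine le_trans (htail t htα) ?_
        have : N ≤ |N| := le_abs_self N
        have he : (0:ℝ) < Real.exp (-(L / α) * t) := Real.exp_pos _
        nlinarith
      calc P {ω | t ≤ B ω} * ENNReal.ofReal t
          ≤ ENNReal.ofReal (2 * |N| * Real.exp (-(L / α) * t)) * ENNReal.ofReal t :=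
            mul_le_mul_left hP _
        _ = ENNReal.ofReal (2 * |N| * Real.exp (-(L / α) * t) * t) :=
            (ENNReal.ofReal_mul (by positivity)).symm
        _ ≤ ENNReal.ofReal (2 * α) * ENNReal.ofReal (Real.exp (-k * (t - α))) := by
            rw [← ENNReal.ofReal_mul (by positivity)]
            apply ENNReal.ofReal_le_ofReal
            -- t ≤ α * exp ((t - α)/α)
            have hexp1 : t / α ≤ Real.exp ((t - α) / α) := by
              have := Real.add_one_le_exp ((t - α) / α)
              have h' : (t - α) / α + 1 = t / α := by field_simp; ring
              linarith [h' ▸ this]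
            have ht_le : t ≤ α * Real.exp ((t - α) / α) := by
              rw [← div_le_iff₀' hαpos] at *
              exact hexp1
            have hexp2 : Real.exp (-(L / α) * t) * Real.exp ((t - α) / α)
                = Real.exp (-L) * Real.exp (-k * (t - α)) := by
              rw [← Real.exp_add, ← Real.exp_add]
              congr 1
              rw [hk]
              field_simp
              ring
            have hNL : |N| * Real.exp (-L) = 1 := by
              rw [← hexp, ← Real.exp_add]
              simp
            have hepos : (0:ℝ) < Real.exp (-(L / α) * t) := Real.exp_pos _
            calc 2 * |N| * Real.exp (-(L / α) * t) * t
                ≤ 2 * |N| * Real.exp (-(L / α) * t) * (α * Real.exp ((t - α) / α)) := by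
                  apply mul_le_mul_of_nonneg_left ht_le (by positivity)
              _ = 2 * α * (|N| * Real.exp (-L)) * Real.exp (-k * (t - α)) := by
                  linear_combination (2 * |N| * α) * hexp2
              _ = 2 * α * Real.exp (-k * (t - α)) := by rw [hNL]; ring
    calc ∫⁻ t in Ioi α, P {ω | t ≤ B ω} * ENNReal.ofReal t
        ≤ ∫⁻ t in Ioi α, ENNReal.ofReal (2 * α) * ENNReal.ofReal (Real.exp (-k * (t - α))) :=
          setLIntegral_mono (by fun_prop) hpt
      _ = ENNReal.ofReal (2 * α) * ENNReal.ofReal (1 / k) := by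
          rw [lintegral_const_mul' _ _ ENNReal.ofReal_ne_top, lintegral_exp_shift k α hkpos]
      _ = ENNReal.ofReal (2 * α * (1 / k)) := (ENNReal.ofReal_mul (by positivity)).symm
      _ = ENNReal.ofReal (2 * α ^ 2 / (L - 1)) := by
          congr 1
          rw [hk]
          field_simp
  -- combine
  calc _ ≤ ENNReal.ofReal 2 * (ENNReal.ofReal (α ^ 2 / 2) + ENNReal.ofReal (2 * α ^ 2 / (L - 1))) :=
        mul_le_mul_right (add_le_add h1 h2) _
    _ = ENNReal.ofReal (2 * (α ^ 2 / 2 + 2 * α ^ 2 / (L - 1))) := by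
        rw [← ENNReal.ofReal_add (by positivity)
            (div_nonneg (by positivity) (by linarith)),
          ← ENNReal.ofReal_mul (by norm_num)]
    _ ≤ ENNReal.ofReal (12 * (a * μ) * L) := by
        apply ENNReal.ofReal_le_ofReal
        have hγ2 : γ ^ 2 ≤ 5.61 := by rw [hγ]; nlinarith
        have hα2' : α ^ 2 ≤ 5.61 * (a * μ * L) := by
          rw [hα2]
          exact mul_le_mul_of_nonneg_right hγ2 haμL.le
        have hdiv : 2 * α ^ 2 / (L - 1) ≤ 0.3125 * α ^ 2 := by
          have : 2 * α ^ 2 / (L - 1) ≤ 2 * α ^ 2 / 6.4 :=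
            div_le_div_of_nonneg_left (by positivity) (by norm_num) (by linarith)
          linarith [this, show 2 * α ^ 2 / 6.4 = 0.3125 * α ^ 2 from by ring]
        linarith
end

section
/- Let a, μ > 0 and let N > 1 be a real number. Set γ := (1+√37)/3 (the positive root of 3γ² − 2γ − 12 = 0) and α := γ·√(aμ·log N). Let Y_0,…,Y_{m−1} (m ∈ ℕ) be independent real random variables with E[Y_l] = 0 and |Y_l| ≤ √(aμ/log N) almost surely for each l, and with Σ_{l=0}^{m−1} Var(Y_l) ≤ 2aμ. Then for every t ≥ α, P(|Σ_{l=0}^{m−1} Y_l| ≥ t) ≤ 2·exp(−(log N/α)·t). -/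
open MeasureTheory ProbabilityTheory

/-- Pointwise quadratic bound on `exp` for small arguments, with the constant `γ²/8`
where `γ = (1+√37)/3`. -/
lemma exp_quad_bound_aux (γ : ℝ) (hγ : γ = (1 + Real.sqrt 37) / 3) :
    ∀ u : ℝ, |u| ≤ 2 / γ → Real.exp u ≤ 1 + u + γ ^ 2 / 8 * u ^ 2 := by
  have h37 : (5 : ℝ) ≤ Real.sqrt 37 := by
    rw [show (5 : ℝ) = Real.sqrt 25 by
      rw [show (25 : ℝ) = 5 ^ 2 by norm_num, Real.sqrt_sq (by norm_num)]]
    exact Real.sqrt_le_sqrt (by norm_num)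
  have hsq : Real.sqrt 37 ^ 2 = 37 := Real.sq_sqrt (by norm_num)
  have hγ2 : 2 ≤ γ := by rw [hγ]; linarith
  have hγq : 3 * γ ^ 2 = 2 * γ + 12 := by
    rw [hγ]; field_simp; nlinarith [hsq]
  intro u hu
  have hγpos : 0 < γ := by linarith
  have hc1 : 2 / γ ≤ 1 := by
    rw [div_le_one hγpos]; linarith
  have hu1 : |u| ≤ 1 := hu.trans hc1
  have hb := Real.exp_bound hu1 (n := 3) (by norm_num)
  have hsum : ∑ m ∈ Finset.range 3, u ^ m / m.factorial = 1 + u + u ^ 2 / 2 := by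
    simp [Finset.sum_range_succ, Nat.factorial]
  rw [hsum] at hb
  have hb' : Real.exp u ≤ 1 + u + u ^ 2 / 2 + |u| ^ 3 * ((3 : ℕ).succ / ((3 : ℕ).factorial * 3)) :=
    by have := (abs_sub_le_iff.1 hb).1; linarith
  have h3 : |u| ^ 3 = |u| * u ^ 2 := by
    rw [pow_succ, sq_abs]; ring
  have h4 : |u| ^ 3 * ((3 : ℕ).succ / ((3 : ℕ).factorial * 3)) ≤ (2 / γ) * u ^ 2 * (2 / 9) := by
    rw [h3]
    have : ((3 : ℕ).succ / ((3 : ℕ).factorial * 3) : ℝ) = 2 / 9 := by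
      norm_num [Nat.factorial]
    rw [this]
    have hu2 : (0 : ℝ) ≤ u ^ 2 := sq_nonneg u
    nlinarith [abs_nonneg u]
  have hkey : 1 / 2 + (2 / γ) * (2 / 9) ≤ γ ^ 2 / 8 := by
    have h98 : 36 * γ + 32 ≤ 9 * γ ^ 3 := by nlinarith [hγq, hγ2]
    calc 1 / 2 + (2 / γ) * (2 / 9) = (36 * γ + 32) / (72 * γ) := by
          field_simp; ring
      _ ≤ (9 * γ ^ 3) / (72 * γ) := by
          apply div_le_div_of_nonneg_right h98 (by positivity) |>.trans_eq rfl
      _ = γ ^ 2 / 8 := by field_simp; ring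
  nlinarith [hb', h4, sq_nonneg u, hkey]

/-- One-sided Bernstein-type tail bound via the Chernoff method, for independent centered
variables bounded by `b`, assuming a quadratic bound on `exp` on `[-s*b, s*b]`. -/
lemma bernstein_one_side
    {Ω : Type*} [MeasurableSpace Ω] (P : Measure Ω) [IsProbabilityMeasure P]
    (b K v s : ℝ) (hb : 0 ≤ b) (hs : 0 ≤ s) (hK : 0 ≤ K) (hv : 0 ≤ v)
    (m : ℕ) (Y : Fin m → Ω → ℝ)
    (hYmeas : ∀ l, Measurable (Y l))
    (hYindep : iIndepFun Y P)
    (hYmean : ∀ l, ∫ ω, Y l ω ∂P = 0)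
    (hYbdd : ∀ l, ∀ᵐ ω ∂P, |Y l ω| ≤ b)
    (hYvar : ∑ l, variance (Y l) P ≤ v)
    (hexp : ∀ u : ℝ, |u| ≤ s * b → Real.exp u ≤ 1 + u + K * u ^ 2)
    (t : ℝ) :
    (P {ω | t ≤ ∑ l, Y l ω}).toReal ≤ Real.exp (-s * t) * Real.exp (K * s ^ 2 * v) := by
  -- integrability of exp(s * Y l)
  have hint : ∀ l, Integrable (fun ω => Real.exp (s * Y l ω)) P := by
    intro l
    refine (integrable_const (Real.exp (s * b))).mono'
      (((hYmeas l).const_mul s).exp.aestronglyMeasurable) ?_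
    filter_upwards [hYbdd l] with ω hω
    rw [Real.norm_eq_abs, abs_of_pos (Real.exp_pos _), Real.exp_le_exp]
    calc s * Y l ω ≤ |s * Y l ω| := le_abs_self _
      _ = s * |Y l ω| := by rw [abs_mul, abs_of_nonneg hs]
      _ ≤ s * b := by exact mul_le_mul_of_nonneg_left hω hs
  -- per-variable mgf bound
  have hmgf : ∀ l, mgf (Y l) P s ≤ Real.exp (K * s ^ 2 * variance (Y l) P) := by
    intro l
    have hmem2 : MemLp (Y l) 2 P := by
      refine MemLp.mono_exponent (q := ⊤) ?_ le_top
      exact memLp_top_of_bound (hYmeas l).aestronglyMeasurable b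
        (by filter_upwards [hYbdd l] with ω hω using by rwa [Real.norm_eq_abs])
    have hintY : Integrable (Y l) P := hmem2.integrable one_le_two
    have hintY2 : Integrable (fun ω => (Y l ω) ^ 2) P := by
      have := hmem2.integrable_sq
      simpa [Pi.pow_apply] using this
    have hptwise : ∀ᵐ ω ∂P, Real.exp (s * Y l ω) ≤ 1 + s * Y l ω + K * s ^ 2 * (Y l ω) ^ 2 := by
      filter_upwards [hYbdd l] with ω hω
      have habs : |s * Y l ω| ≤ s * b := by
        rw [abs_mul, abs_of_nonneg hs]
        exact mul_le_mul_of_nonneg_left hω hs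
      have := hexp (s * Y l ω) habs
      calc Real.exp (s * Y l ω) ≤ 1 + s * Y l ω + K * (s * Y l ω) ^ 2 := this
        _ = 1 + s * Y l ω + K * s ^ 2 * (Y l ω) ^ 2 := by ring
    have hintRHS : Integrable (fun ω => 1 + s * Y l ω + K * s ^ 2 * (Y l ω) ^ 2) P := by
      exact ((integrable_const (1 : ℝ)).add (hintY.const_mul s)).add (hintY2.const_mul _)
    have hI : mgf (Y l) P s ≤ ∫ ω, (1 + s * Y l ω + K * s ^ 2 * (Y l ω) ^ 2) ∂P :=
      integral_mono_ae (hint l) hintRHS hptwise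
    have hvarEq : ∫ ω, (Y l ω) ^ 2 ∂P = variance (Y l) P := by
      rw [variance_eq_sub hmem2, hYmean l]
      simp [Pi.pow_apply]
    have hIval : ∫ ω, (1 + s * Y l ω + K * s ^ 2 * (Y l ω) ^ 2) ∂P
        = 1 + K * s ^ 2 * variance (Y l) P := by
      have h1 : Integrable (fun ω => 1 + s * Y l ω) P :=
        (integrable_const (1 : ℝ)).add (hintY.const_mul s)
      have h2 : Integrable (fun ω => K * s ^ 2 * (Y l ω) ^ 2) P := hintY2.const_mul _
      rw [integral_add h1 h2, integral_add (integrable_const (1 : ℝ)) (hintY.const_mul s),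
        integral_const, integral_const_mul, integral_const_mul, hYmean l, hvarEq]
      simp
    rw [hIval] at hI
    refine hI.trans ?_
    have := Real.add_one_le_exp (K * s ^ 2 * variance (Y l) P)
    linarith
  -- mgf of the sum
  have hS : mgf (∑ l, Y l) P s = ∏ l, mgf (Y l) P s :=
    hYindep.mgf_sum hYmeas Finset.univ
  have hprod : ∏ l, mgf (Y l) P s ≤ Real.exp (K * s ^ 2 * v) := by
    calc ∏ l, mgf (Y l) P s ≤ ∏ l, Real.exp (K * s ^ 2 * variance (Y l) P) := by
          refine Finset.prod_le_prod (fun l _ => mgf_nonneg) (fun l _ => hmgf l)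
      _ = Real.exp (∑ l, K * s ^ 2 * variance (Y l) P) := by
          rw [Real.exp_sum]
      _ ≤ Real.exp (K * s ^ 2 * v) := by
          rw [Real.exp_le_exp, ← Finset.mul_sum]
          exact mul_le_mul_of_nonneg_left hYvar (by positivity)
  -- Chernoff bound
  have hchern := measure_ge_le_exp_mul_mgf (X := ∑ l, Y l) (μ := P) t hs
    (hYindep.integrable_exp_mul_sum hYmeas (fun l _ => hint l))
  have hset : {ω | t ≤ ∑ l, Y l ω} = {ω | t ≤ (∑ l, Y l) ω} := by
    ext ω; simp [Finset.sum_apply]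
  rw [hset]
  refine hchern.trans ?_
  rw [hS]
  exact mul_le_mul_of_nonneg_left hprod (Real.exp_pos _).le

/-- Bernstein tail bound for a sum of independent, centered, bounded
random variables: with `γ = (1+√37)/3`, `α = γ·√(aμ·log N)`, if `|Y_l| ≤ √(aμ/log N)`
a.s., `E[Y_l] = 0`, and `Σ Var(Y_l) ≤ 2aμ`, then for `t ≥ α`,
`P(|Σ Y_l| ≥ t) ≤ 2·exp(−(log N/α)·t)`. -/
theorem bernstein_tail_bound
    {Ω : Type*} [MeasurableSpace Ω] (P : Measure Ω) [IsProbabilityMeasure P]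
    (a μ N : ℝ) (ha : 0 < a) (hμ : 0 < μ) (hN : 1 < N)
    (γ α : ℝ) (hγ : γ = (1 + Real.sqrt 37) / 3)
    (hα : α = γ * Real.sqrt (a * μ * Real.log N))
    (m : ℕ) (Y : Fin m → Ω → ℝ)
    (hYmeas : ∀ l, Measurable (Y l))
    (hYindep : iIndepFun Y P)
    (hYmean : ∀ l, ∫ ω, Y l ω ∂P = 0)
    (hYbdd : ∀ l, ∀ᵐ ω ∂P, |Y l ω| ≤ Real.sqrt (a * μ / Real.log N))
    (hYvar : ∑ l, variance (Y l) P ≤ 2 * (a * μ)) :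
    ∀ t : ℝ, α ≤ t →
      (P {ω | t ≤ |∑ l, Y l ω|}).toReal ≤ 2 * Real.exp (-(Real.log N / α) * t) := by
  intro t ht
  have hL : 0 < Real.log N := Real.log_pos hN
  set L := Real.log N with hLdef
  have hγpos : 0 < γ := by
    rw [hγ]
    have : (0 : ℝ) ≤ Real.sqrt 37 := Real.sqrt_nonneg _
    linarith
  have haμL : 0 < a * μ * L := by positivity
  set R := Real.sqrt (a * μ * L) with hRdef
  have hR : 0 < R := Real.sqrt_pos.2 haμL
  have hR2 : R ^ 2 = a * μ * L := Real.sq_sqrt haμL.le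
  have hαpos : 0 < α := by rw [hα]; positivity
  set b := Real.sqrt (a * μ / L) with hbdef
  have hbR : b = R / L := by
    rw [hbdef, hRdef, show a * μ / L = (a * μ * L) / L ^ 2 by field_simp,
      Real.sqrt_div haμL.le, Real.sqrt_sq hL.le]
  set s := 2 * L / α with hsdef
  have hs : 0 ≤ s := by positivity
  have hRL : R / L * (2 * L / α) = 2 / γ := by
    rw [hα]
    field_simp
  have hsb : s * b = 2 / γ := by
    rw [hsdef, hbR, mul_comm]
    exact hRL
  have hexp := exp_quad_bound_aux γ hγ
  have hexp' : ∀ u : ℝ, |u| ≤ s * b → Real.exp u ≤ 1 + u + γ ^ 2 / 8 * u ^ 2 := by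
    intro u hu
    exact hexp u (by rwa [hsb] at hu)
  have hbnn : (0 : ℝ) ≤ b := Real.sqrt_nonneg _
  have hKnn : (0 : ℝ) ≤ γ ^ 2 / 8 := by positivity
  have hvnn : (0 : ℝ) ≤ 2 * (a * μ) := by positivity
  -- upper tail
  have h1 := bernstein_one_side P b (γ ^ 2 / 8) (2 * (a * μ)) s hbnn hs hKnn hvnn m Y
    hYmeas hYindep hYmean hYbdd hYvar hexp' t
  -- lower tail, via negated variables
  have hZmeas : ∀ l, Measurable (fun ω => -(Y l ω)) := fun l => (hYmeas l).neg
  have hZindep : iIndepFun (fun l => fun ω => -(Y l ω)) P :=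
    hYindep.comp (fun _ => Neg.neg) (fun _ => measurable_neg)
  have hZmean : ∀ l, ∫ ω, -(Y l ω) ∂P = 0 := by
    intro l
    rw [integral_neg, hYmean l, neg_zero]
  have hZbdd : ∀ l, ∀ᵐ ω ∂P, |(-(Y l ω))| ≤ b := by
    intro l
    filter_upwards [hYbdd l] with ω hω
    rwa [abs_neg]
  have hZvar : ∑ l, variance (fun ω => -(Y l ω)) P ≤ 2 * (a * μ) := by
    have heq : ∀ l : Fin m, variance (fun ω => -(Y l ω)) P = variance (Y l) P := by
      intro l
      rw [show (fun ω => -(Y l ω)) = (fun ω => (-1 : ℝ) * Y l ω) by funext ω; ring,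
        variance_const_mul]
      norm_num
    simp only [heq]
    exact hYvar
  have h2 := bernstein_one_side P b (γ ^ 2 / 8) (2 * (a * μ)) s hbnn hs hKnn hvnn m
    (fun l => fun ω => -(Y l ω)) hZmeas hZindep hZmean hZbdd hZvar hexp' t
  -- combine the two tails
  have hsub : {ω | t ≤ |∑ l, Y l ω|} ⊆
      {ω | t ≤ ∑ l, Y l ω} ∪ {ω | t ≤ ∑ l, -(Y l ω)} := by
    intro ω hω
    have hω' : t ≤ |∑ l, Y l ω| := hω
    rcases le_abs.1 hω' with h | h
    · exact Or.inl h
    · exact Or.inr (by simpa using h)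
  have hmeasle : P {ω | t ≤ |∑ l, Y l ω|} ≤
      P {ω | t ≤ ∑ l, Y l ω} + P {ω | t ≤ ∑ l, -(Y l ω)} :=
    (measure_mono hsub).trans (measure_union_le _ _)
  have hα2 : α ^ 2 = γ ^ 2 * (a * μ * L) := by rw [hα, mul_pow, hR2]
  have hKs : γ ^ 2 / 8 * s ^ 2 * (2 * (a * μ)) = L := by
    have hγne : γ ≠ 0 := ne_of_gt hγpos
    have hane : a ≠ 0 := ne_of_gt ha
    have hμne : μ ≠ 0 := ne_of_gt hμ
    have hLne : L ≠ 0 := ne_of_gt hL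
    rw [hsdef, div_pow, hα2]
    field_simp
    ring
  have hexpo : -s * t + L ≤ -(L / α) * t := by
    have h5 : L ≤ L / α * t := by
      calc L = L / α * α := by field_simp
        _ ≤ L / α * t := by
            exact mul_le_mul_of_nonneg_left ht (le_of_lt (div_pos hL hαpos))
    rw [hsdef, show (2 : ℝ) * L / α = 2 * (L / α) by ring]
    linarith
  calc (P {ω | t ≤ |∑ l, Y l ω|}).toReal
      ≤ (P {ω | t ≤ ∑ l, Y l ω} + P {ω | t ≤ ∑ l, -(Y l ω)}).toReal :=
        ENNReal.toReal_mono (by finiteness) hmeasle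
    _ = (P {ω | t ≤ ∑ l, Y l ω}).toReal + (P {ω | t ≤ ∑ l, -(Y l ω)}).toReal :=
        ENNReal.toReal_add (measure_ne_top _ _) (measure_ne_top _ _)
    _ ≤ (Real.exp (-s * t) * Real.exp (γ ^ 2 / 8 * s ^ 2 * (2 * (a * μ))))
        + (Real.exp (-s * t) * Real.exp (γ ^ 2 / 8 * s ^ 2 * (2 * (a * μ)))) :=
        add_le_add h1 h2
    _ = 2 * Real.exp (-s * t + γ ^ 2 / 8 * s ^ 2 * (2 * (a * μ))) := by
        rw [← Real.exp_add]; ring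
    _ = 2 * Real.exp (-s * t + L) := by rw [hKs]
    _ ≤ 2 * Real.exp (-(L / α) * t) := by
        have := Real.exp_le_exp.2 hexpo
        linarith
end

section
/- Let N be a real number with log N ≥ 7.4, let μ ∈ ℕ with μ ≥ 1, let m ∈ ℕ with m ≤ N, let F > 0, a > 0, and let ε > 0. On a probability space, let (g_l)_{l=0}^{μ−1} and (g'_l)_{l=0}^{μ−1} be ℝ^m-valued random vectors and let J : Ω → {1,…,m} be measurable. Assume: (a) every coordinate of every g_l and g'_l lies in [0, 4F²a] almost surely; (b) the vectors g'_0,…,g'_{μ−1} are mutually independent; (c) the vectors g_0,…,g_{μ−1} are mutually independent; (d) for each l, g'_l has the same law as g_l; (e) the family (g_0,…,g_{μ−1}, J) is independent of (g'_0,…,g'_{μ−1}). Then E[Σ_{l=0}^{μ−1} g'_{J,l}] ≤ (1+ε)·E[Σ_{l=0}^{μ−1} g_{J,l}] + (24(1+ε)²/ε)·F²·a·log N, where g_{J,l} denotes the J-th coordinate of g_l. -/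
open MeasureTheory ProbabilityTheory



lemma exp_neg_le_quad (u : ℝ) (hu : 0 ≤ u) : Real.exp (-u) ≤ 1 - u + u ^ 2 / 2 := by
  set f : ℝ → ℝ := fun v => 1 - v + v ^ 2 / 2 - Real.exp (-v) with hf
  have hderiv : ∀ x : ℝ, HasDerivAt f (-1 + x + Real.exp (-x)) x := by
    intro x
    have h1 : HasDerivAt (fun v : ℝ => 1 - v + v ^ 2 / 2) (0 - 1 + 2 * x ^ 1 / 2) x := by
      exact (((hasDerivAt_const x (1:ℝ)).sub (hasDerivAt_id x)).add
        ((hasDerivAt_pow 2 x).div_const 2))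
    have h2 : HasDerivAt (fun v : ℝ => Real.exp (-v)) (Real.exp (-x) * (-1)) x :=
      ((hasDerivAt_id x).neg).exp
    have := h1.sub h2
    exact this.congr_deriv (by ring)
  have hmono : MonotoneOn f (Set.Ici (0:ℝ)) := by
    apply monotoneOn_of_deriv_nonneg (convex_Ici 0)
    · exact (Continuous.continuousOn (by continuity))
    · intro x hx
      exact (hderiv x).differentiableAt.differentiableWithinAt
    · intro x hx
      rw [(hderiv x).deriv]
      have := Real.add_one_le_exp (-x)
      linarith
  have h0 : f 0 = 0 := by simp [hf]
  have := hmono (Set.self_mem_Ici) hu hu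
  rw [h0] at this
  simp only [hf] at this
  linarith

lemma integrable_of_bdd {Ω : Type*} [MeasurableSpace Ω] (P : Measure Ω) [IsProbabilityMeasure P]
    {f : Ω → ℝ} (hf : Measurable f) {C : ℝ} (h : ∀ᵐ ω ∂P, |f ω| ≤ C) : Integrable f P := by
  refine (integrable_const C).mono' hf.aestronglyMeasurable ?_
  simpa [Real.norm_eq_abs] using h

lemma mgf_one_step {Ω : Type*} [MeasurableSpace Ω] (P : Measure Ω) [IsProbabilityMeasure P]
    (X : Ω → ℝ) (hX : Measurable X) (b lam : ℝ) (hb : 0 < b) (hlam : 0 < lam)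
    (hbdd : ∀ᵐ ω ∂P, X ω ∈ Set.Icc 0 b) :
    ∫ ω, Real.exp (-lam * X ω) ∂P ≤
      Real.exp (-(lam - lam ^ 2 * b / 2) * ∫ ω, X ω ∂P) := by
  have hintX : Integrable X P := integrable_of_bdd P hX (hbdd.mono fun ω h => by
    rw [abs_of_nonneg h.1]; exact h.2)
  have hintX2 : Integrable (fun ω => X ω ^ 2) P := integrable_of_bdd P (hX.pow_const 2)
    (C := b ^ 2) (hbdd.mono fun ω h => by
      rw [abs_of_nonneg (sq_nonneg _)]
      exact pow_le_pow_left₀ h.1 h.2 2)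
  have hintE : Integrable (fun ω => Real.exp (-lam * X ω)) P := integrable_of_bdd P
    ((hX.const_mul (-lam)).exp) (C := 1) (hbdd.mono fun ω h => by
      rw [abs_of_pos (Real.exp_pos _)]
      rw [show -lam * X ω = -(lam * X ω) by ring]
      exact Real.exp_le_one_iff.2 (by nlinarith [h.1])
      )
  have step1 : ∫ ω, Real.exp (-lam * X ω) ∂P ≤
      ∫ ω, (1 - lam * X ω + (lam * X ω) ^ 2 / 2) ∂P := by
    refine integral_mono_ae hintE ?_ ?_
    · exact ((integrable_const 1).sub (hintX.const_mul lam)).add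
        (by simpa [mul_pow] using ((hintX2.const_mul (lam ^ 2)).div_const 2))
    · exact hbdd.mono fun ω h => by
        simp only
        rw [show -lam * X ω = -(lam * X ω) by ring]
        exact exp_neg_le_quad _ (mul_nonneg hlam.le h.1)
  have step2 : ∫ ω, (1 - lam * X ω + (lam * X ω) ^ 2 / 2) ∂P =
      1 - lam * ∫ ω, X ω ∂P + lam ^ 2 * (∫ ω, X ω ^ 2 ∂P) / 2 := by
    rw [integral_add, integral_sub, integral_const]
    · simp only [probReal_univ, ENNReal.toReal_one, smul_eq_mul, one_mul]
      rw [integral_const_mul]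
      congr 1
      rw [show (fun ω => (lam * X ω) ^ 2 / 2) = fun ω => (lam ^ 2 / 2) * X ω ^ 2 by
        funext ω; ring]
      rw [integral_const_mul]
      ring
    · exact integrable_const 1
    · exact hintX.const_mul lam
    · exact (integrable_const 1).sub (hintX.const_mul lam)
    · refine Integrable.congr ((hintX2.const_mul (lam ^ 2 / 2))) ?_
      filter_upwards with ω; ring
  have step3 : ∫ ω, X ω ^ 2 ∂P ≤ b * ∫ ω, X ω ∂P := by
    rw [← integral_const_mul]
    refine integral_mono_ae hintX2 (hintX.const_mul b) ?_
    exact hbdd.mono fun ω h => by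
      simp only
      nlinarith [h.1, h.2]
  have hXnn : 0 ≤ ∫ ω, X ω ∂P := integral_nonneg_of_ae (hbdd.mono fun ω h => h.1)
  calc ∫ ω, Real.exp (-lam * X ω) ∂P
      ≤ 1 - lam * ∫ ω, X ω ∂P + lam ^ 2 * (∫ ω, X ω ^ 2 ∂P) / 2 := step1.trans (le_of_eq step2)
    _ ≤ 1 + (-(lam - lam ^ 2 * b / 2) * ∫ ω, X ω ∂P) := by nlinarith [step3]
    _ ≤ Real.exp (-(lam - lam ^ 2 * b / 2) * ∫ ω, X ω ∂P) := by
        linarith [Real.add_one_le_exp (-(lam - lam ^ 2 * b / 2) * ∫ ω, X ω ∂P)]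


/-- Abstract form of Lemma 5.6: comparing the expected selected block sum
along an independent copy with the original one, up to a Bernstein-type error term. -/
theorem selected_block_sum_comparison
    {Ω : Type*} [MeasurableSpace Ω] (P : Measure Ω) [IsProbabilityMeasure P]
    (N : ℝ) (hN : 7.4 ≤ Real.log N)
    (μn : ℕ) (hμn : 1 ≤ μn) (m : ℕ) (hm : (m : ℝ) ≤ N)
    (F a ε : ℝ) (hF : 0 < F) (ha : 0 < a) (hε : 0 < ε)
    (g g' : Fin μn → Ω → Fin m → ℝ)
    (hgmeas : ∀ l, Measurable (g l)) (hg'meas : ∀ l, Measurable (g' l))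
    (J : Ω → Fin m) (hJ : Measurable J)
    (hgbdd : ∀ l (j : Fin m), ∀ᵐ ω ∂P, g l ω j ∈ Set.Icc (0 : ℝ) (4 * F ^ 2 * a))
    (hg'bdd : ∀ l (j : Fin m), ∀ᵐ ω ∂P, g' l ω j ∈ Set.Icc (0 : ℝ) (4 * F ^ 2 * a))
    (hg'indep : iIndepFun g' P)
    (hgindep : iIndepFun g P)
    (hlaw : ∀ l, Measure.map (g' l) P = Measure.map (g l) P)
    (hcross : Indep
      ((⨆ l, MeasurableSpace.comap (g l) inferInstance) ⊔
        MeasurableSpace.comap J inferInstance)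
      (⨆ l, MeasurableSpace.comap (g' l) inferInstance) P) :
    ∫ ω, ∑ l, g' l ω (J ω) ∂P ≤
      (1 + ε) * ∫ ω, ∑ l, g l ω (J ω) ∂P
        + (24 * (1 + ε) ^ 2 / ε) * F ^ 2 * a * Real.log N := by
  classical
  -- basic constants
  set b : ℝ := 4 * F ^ 2 * a with hb_def
  have hb : 0 < b := by positivity
  have hε1 : (0:ℝ) < 1 + ε := by linarith
  set ep : ℝ := ε / (1 + ε) with hep_def
  have hep : 0 < ep := by positivity
  have hep1 : ep < 1 := by
    rw [hep_def, div_lt_one hε1]; linarith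
  have hepc : (1 + ε) * (1 - ep) = 1 := by
    rw [hep_def]
    field_simp
    ring
  set lam : ℝ := 2 * ep / b with hlam_def
  have hlam : 0 < lam := by positivity
  have hlamb : lam * b / 2 = ep := by
    rw [hlam_def]
    field_simp
  -- nonemptiness and m ≥ 1
  have hΩ : Nonempty Ω := by
    by_contra h
    rw [not_nonempty_iff] at h
    have h0 : P Set.univ = 1 := measure_univ
    rw [Set.univ_eq_empty_iff.mpr h, measure_empty] at h0
    exact zero_ne_one h0
  have hm1 : 1 ≤ m := by
    rcases Nat.eq_zero_or_pos m with h | h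
    · exfalso
      have := J (Classical.arbitrary Ω)
      rw [h] at this
      exact this.elim0
    · exact h
  -- coordinate functions, means
  have hGmeas : ∀ l (j : Fin m), Measurable (fun ω => g l ω j) :=
    fun l j => (measurable_pi_apply j).comp (hgmeas l)
  have hG'meas : ∀ l (j : Fin m), Measurable (fun ω => g' l ω j) :=
    fun l j => (measurable_pi_apply j).comp (hg'meas l)
  set r : Fin μn → Fin m → ℝ := fun l j => ∫ ω, g l ω j ∂P with hr_def
  set H : Fin m → ℝ := fun j => ∑ l, r l j with hH_def
  -- indicator functions
  set φ : Fin m → Ω → ℝ := fun j ω => if J ω = j then 1 else 0 with hφ_def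
  have hφmeas : ∀ j, Measurable (φ j) := by
    intro j
    exact Measurable.ite (hJ (MeasurableSet.singleton j)) measurable_const measurable_const
  have hφ01 : ∀ j ω, 0 ≤ φ j ω ∧ φ j ω ≤ 1 := by
    intro j ω
    simp only [hφ_def]
    split <;> norm_num
  have hsel : ∀ (h : Ω → Fin m → ℝ) (ω : Ω), h ω (J ω) = ∑ j, φ j ω * h ω j := by
    intro h ω
    simp only [hφ_def, ite_mul, one_mul, zero_mul]
    rw [Finset.sum_ite_eq]
    simp
  set p : Fin m → ℝ := fun j => ∫ ω, φ j ω ∂P with hp_def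
  -- integrability of coordinates
  have hintG : ∀ l (j : Fin m), Integrable (fun ω => g l ω j) P := by
    intro l j
    exact integrable_of_bdd P (hGmeas l j) ((hgbdd l j).mono fun ω h => by
      rw [abs_of_nonneg h.1]; exact h.2)
  have hintG' : ∀ l (j : Fin m), Integrable (fun ω => g' l ω j) P := by
    intro l j
    exact integrable_of_bdd P (hG'meas l j) ((hg'bdd l j).mono fun ω h => by
      rw [abs_of_nonneg h.1]; exact h.2)
  have hintφG' : ∀ l (j : Fin m), Integrable (fun ω => φ j ω * g' l ω j) P := by
    intro l j
    refine integrable_of_bdd P ((hφmeas j).mul (hG'meas l j)) (C := b)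
      ((hg'bdd l j).mono fun ω h => ?_)
    rw [abs_mul]
    calc |φ j ω| * |g' l ω j| ≤ 1 * b := by
          refine mul_le_mul ?_ ?_ (abs_nonneg _) zero_le_one
          · rw [abs_of_nonneg (hφ01 j ω).1]; exact (hφ01 j ω).2
          · rw [abs_of_nonneg h.1]; exact h.2
      _ = b := one_mul b
  have hintφG : ∀ l (j : Fin m), Integrable (fun ω => φ j ω * g l ω j) P := by
    intro l j
    refine integrable_of_bdd P ((hφmeas j).mul (hGmeas l j)) (C := b)
      ((hgbdd l j).mono fun ω h => ?_)
    rw [abs_mul]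
    calc |φ j ω| * |g l ω j| ≤ 1 * b := by
          refine mul_le_mul ?_ ?_ (abs_nonneg _) zero_le_one
          · rw [abs_of_nonneg (hφ01 j ω).1]; exact (hφ01 j ω).2
          · rw [abs_of_nonneg h.1]; exact h.2
      _ = b := one_mul b
  -- laws agree on coordinates
  have hlawcoord : ∀ l (j : Fin m), ∫ ω, g' l ω j ∂P = r l j := by
    intro l j
    have h1 : ∫ ω, g' l ω j ∂P = ∫ y, y j ∂(Measure.map (g' l) P) :=
      (integral_map (hg'meas l).aemeasurable
        (measurable_pi_apply j).aestronglyMeasurable).symm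
    have h2 : ∫ ω, g l ω j ∂P = ∫ y, y j ∂(Measure.map (g l) P) :=
      (integral_map (hgmeas l).aemeasurable
        (measurable_pi_apply j).aestronglyMeasurable).symm
    rw [h1, hlaw l]
    exact h2.symm
  -- independence of φ j and g' coordinates
  have hIF : ∀ l (j : Fin m), IndepFun (φ j) (fun ω => g' l ω j) P := by
    intro l j
    have hbase : IndepFun J (g' l) P := by
      have h1 : Indep (MeasurableSpace.comap J inferInstance)
          (⨆ l, MeasurableSpace.comap (g' l) inferInstance) P :=
        indep_of_indep_of_le_left hcross le_sup_right
      exact indep_of_indep_of_le_right h1 (le_iSup (fun l => MeasurableSpace.comap (g' l) inferInstance) l)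
    have := hbase.comp (φ := fun k : Fin m => if k = j then (1:ℝ) else 0)
      (ψ := fun v : Fin m → ℝ => v j) (measurable_from_top) (measurable_pi_apply j : Measurable (fun v : Fin m → ℝ => v j))
    exact this
  have hintφ : ∀ j, Integrable (φ j) P := by
    intro j
    refine integrable_of_bdd P (hφmeas j) (C := 1) (Filter.Eventually.of_forall fun ω => ?_)
    rw [abs_of_nonneg (hφ01 j ω).1]; exact (hφ01 j ω).2
  -- step A : LHS = ∑ j, p j * H j
  have stepA : ∫ ω, ∑ l, g' l ω (J ω) ∂P = ∑ j, p j * H j := by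
    have e1 : ∫ ω, ∑ l, g' l ω (J ω) ∂P = ∑ l, ∑ j, ∫ ω, φ j ω * g' l ω j ∂P := by
      rw [show (fun ω => ∑ l, g' l ω (J ω)) = fun ω => ∑ l, ∑ j, φ j ω * g' l ω j from
        funext fun ω => Finset.sum_congr rfl fun l _ => hsel (g' l) ω]
      rw [integral_finset_sum _ (fun l _ => integrable_finset_sum _ (fun j _ => hintφG' l j))]
      exact Finset.sum_congr rfl fun l _ =>
        integral_finset_sum _ (fun j _ => hintφG' l j)
    have e2 : ∀ l (j : Fin m), ∫ ω, φ j ω * g' l ω j ∂P = p j * r l j := by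
      intro l j
      have h := (hIF l j).integral_mul_eq_mul_integral (hintφ j).aestronglyMeasurable (hintG' l j).aestronglyMeasurable
      calc ∫ ω, φ j ω * g' l ω j ∂P
          = ∫ ω, (φ j * fun ω' => g' l ω' j) ω ∂P := by rfl
        _ = (∫ ω, φ j ω ∂P) * ∫ ω, g' l ω j ∂P := h
        _ = p j * r l j := by rw [hlawcoord l j]
    rw [e1]
    rw [Finset.sum_congr rfl fun l _ => Finset.sum_congr rfl fun j _ => e2 l j]
    rw [Finset.sum_comm]
    exact Finset.sum_congr rfl fun j _ => by rw [hH_def, Finset.mul_sum]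
  -- step A2 : ∫ H(J) = ∑ j, p j * H j
  have stepA2 : ∫ ω, (∑ j, φ j ω * H j) ∂P = ∑ j, p j * H j := by
    rw [integral_finset_sum _ (fun j _ => (hintφ j).mul_const (H j))]
    exact Finset.sum_congr rfl fun j _ => integral_mul_const _ _
  -- step B : each exponential integral ≤ 1
  have hkeylam : lam - lam ^ 2 * b / 2 = lam * (1 - ep) := by
    have h : lam ^ 2 * b / 2 = lam * ep := by rw [← hlamb]; ring
    linarith [h]
  have stepB : ∀ j : Fin m,
      ∫ ω, Real.exp (lam * ((1 - ep) * H j - ∑ l, g l ω j)) ∂P ≤ 1 := by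
    intro j
    set Xl : Fin μn → Ω → ℝ := fun l ω => g l ω j with hXl_def
    have hXlmeas : ∀ l, Measurable (Xl l) := fun l => hGmeas l j
    have hindepX : iIndepFun Xl P :=
      hgindep.comp (fun _ v => v j) (fun _ => measurable_pi_apply j)
    have hmgf : mgf (∑ l, Xl l) P (-lam) = ∏ l, mgf (Xl l) P (-lam) :=
      hindepX.mgf_sum hXlmeas Finset.univ
    have hone : ∀ l, mgf (Xl l) P (-lam) ≤ Real.exp (-(lam * (1 - ep)) * r l j) := by
      intro l
      have h := mgf_one_step P (Xl l) (hXlmeas l) b lam hb hlam (hgbdd l j)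
      calc mgf (Xl l) P (-lam) = ∫ ω, Real.exp (-lam * Xl l ω) ∂P := rfl
        _ ≤ Real.exp (-(lam - lam ^ 2 * b / 2) * ∫ ω, Xl l ω ∂P) := h
        _ = Real.exp (-(lam * (1 - ep)) * r l j) := by rw [hkeylam]
    have hprod : mgf (∑ l, Xl l) P (-lam) ≤ Real.exp (-(lam * (1 - ep)) * H j) := by
      rw [hmgf]
      calc ∏ l, mgf (Xl l) P (-lam) ≤ ∏ l, Real.exp (-(lam * (1 - ep)) * r l j) :=
            Finset.prod_le_prod (fun l _ => mgf_nonneg) (fun l _ => hone l)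
        _ = Real.exp (∑ l, -(lam * (1 - ep)) * r l j) := by rw [Real.exp_sum]
        _ = Real.exp (-(lam * (1 - ep)) * H j) := by rw [hH_def, ← Finset.mul_sum]
    have hSrw : (fun ω => ∑ l, g l ω j) = (∑ l, Xl l) := by
      funext ω; rw [Finset.sum_apply]
    have hmgfS : ∫ ω, Real.exp (-lam * ∑ l, g l ω j) ∂P = mgf (∑ l, Xl l) P (-lam) := by
      rw [mgf]
      congr 1
      funext ω
      simp [Finset.sum_apply]
      exact Or.inl rfl
    calc ∫ ω, Real.exp (lam * ((1 - ep) * H j - ∑ l, g l ω j)) ∂P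
        = ∫ ω, Real.exp (lam * ((1 - ep) * H j)) * Real.exp (-lam * ∑ l, g l ω j) ∂P := by
          congr 1; funext ω; rw [← Real.exp_add]; ring_nf
      _ = Real.exp (lam * ((1 - ep) * H j)) * ∫ ω, Real.exp (-lam * ∑ l, g l ω j) ∂P :=
          integral_const_mul _ _
      _ ≤ Real.exp (lam * ((1 - ep) * H j)) * Real.exp (-(lam * (1 - ep)) * H j) := by
          refine mul_le_mul_of_nonneg_left ?_ (Real.exp_pos _).le
          rw [hmgfS]; exact hprod
      _ = 1 := by rw [← Real.exp_add, show lam * ((1 - ep) * H j) + -(lam * (1 - ep)) * H j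
            = 0 from by ring, Real.exp_zero]
  -- step C : main concentration bound
  have stepC : (1 - ep) * (∑ j, p j * H j) - (∫ ω, ∑ l, g l ω (J ω) ∂P)
      ≤ (Real.log m + 1) / lam := by
    set t0 : ℝ := Real.log m / lam with ht0_def
    set Efun : Ω → ℝ := fun ω => ∑ j, Real.exp (lam * ((1 - ep) * H j - ∑ l, g l ω j))
      with hE_def
    set Xfun : Ω → ℝ :=
      fun ω => (1 - ep) * (∑ j, φ j ω * H j) - ∑ l, ∑ j, φ j ω * g l ω j with hX_def
    have hXval : ∀ ω, Xfun ω = (1 - ep) * H (J ω) - ∑ l, g l ω (J ω) := by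
      intro ω
      rw [hX_def]
      simp only
      rw [show H (J ω) = ∑ j, φ j ω * H j from hsel (fun _ j => H j) ω,
        Finset.sum_congr rfl (fun l (_ : l ∈ Finset.univ) => hsel (g l) ω)]
    have hpoint : ∀ ω : Ω, Xfun ω ≤ t0 + (Real.exp (-(lam * t0)) / lam) * Efun ω := by
      intro ω
      have h1 : lam * (Xfun ω - t0) ≤ Real.exp (lam * (Xfun ω - t0)) := by
        have := Real.add_one_le_exp (lam * (Xfun ω - t0)); linarith
      have h2 : Real.exp (lam * Xfun ω) ≤ Efun ω := by
        rw [hXval ω, hE_def]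
        exact Finset.single_le_sum
          (f := fun j => Real.exp (lam * ((1 - ep) * H j - ∑ l, g l ω j)))
          (fun j _ => (Real.exp_pos _).le) (Finset.mem_univ (J ω))
      have e1 : Real.exp (lam * (Xfun ω - t0))
          = Real.exp (-(lam * t0)) * Real.exp (lam * Xfun ω) := by
        rw [← Real.exp_add]; ring_nf
      have h4 : lam * (Xfun ω - t0) ≤ Real.exp (-(lam * t0)) * Efun ω :=
        (h1.trans (le_of_eq e1)).trans
          (mul_le_mul_of_nonneg_left h2 (Real.exp_pos _).le)
      have h5 : Xfun ω - t0 ≤ (Real.exp (-(lam * t0)) * Efun ω) / lam := by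
        rw [le_div_iff₀ hlam]
        linarith [h4]
      calc Xfun ω = (Xfun ω - t0) + t0 := by ring
        _ ≤ (Real.exp (-(lam * t0)) * Efun ω) / lam + t0 := by linarith
        _ = t0 + (Real.exp (-(lam * t0)) / lam) * Efun ω := by ring
    have hintφH : Integrable (fun ω => ∑ j, φ j ω * H j) P :=
      integrable_finset_sum _ fun j _ => (hintφ j).mul_const _
    have hintSsel : Integrable (fun ω => ∑ l, ∑ j, φ j ω * g l ω j) P :=
      integrable_finset_sum _ fun l _ => integrable_finset_sum _ fun j _ => hintφG l j
    have hintX : Integrable Xfun P := by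
      rw [hX_def]
      exact (hintφH.const_mul (1 - ep)).sub hintSsel
    have hSmeas : ∀ j : Fin m, Measurable (fun ω => ∑ l, g l ω j) :=
      fun j => Finset.measurable_sum _ (fun l _ => hGmeas l j)
    have hSnn : ∀ j : Fin m, ∀ᵐ ω ∂P, 0 ≤ ∑ l, g l ω j := by
      intro j
      have h := (ae_all_iff (ι := Fin μn)).2 (fun l => hgbdd l j)
      exact h.mono fun ω hω => Finset.sum_nonneg fun l _ => (hω l).1
    have hintEterm : ∀ j : Fin m,
        Integrable (fun ω => Real.exp (lam * ((1 - ep) * H j - ∑ l, g l ω j))) P := by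
      intro j
      refine integrable_of_bdd P ?_ (C := Real.exp (lam * ((1 - ep) * H j)))
        ((hSnn j).mono fun ω h => ?_)
      · exact ((measurable_const.sub (hSmeas j)).const_mul lam).exp
      · rw [abs_of_pos (Real.exp_pos _)]
        exact Real.exp_le_exp.2 (by nlinarith [hlam])
    have hintE : Integrable Efun P := by
      rw [hE_def]
      exact integrable_finset_sum _ fun j _ => hintEterm j
    have hmainint : ∫ ω, Xfun ω ∂P
        ≤ t0 + (Real.exp (-(lam * t0)) / lam) * ∫ ω, Efun ω ∂P := by
      calc ∫ ω, Xfun ω ∂P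
          ≤ ∫ ω, (t0 + (Real.exp (-(lam * t0)) / lam) * Efun ω) ∂P :=
            integral_mono hintX ((integrable_const t0).add (hintE.const_mul _)) hpoint
        _ = t0 + (Real.exp (-(lam * t0)) / lam) * ∫ ω, Efun ω ∂P := by
            rw [integral_add (integrable_const t0) (hintE.const_mul _), integral_const,
              integral_const_mul]
            simp [measure_univ]
    have hEbound : ∫ ω, Efun ω ∂P ≤ (m : ℝ) := by
      rw [hE_def]
      calc ∫ ω, ∑ j, Real.exp (lam * ((1 - ep) * H j - ∑ l, g l ω j)) ∂P
          = ∑ j, ∫ ω, Real.exp (lam * ((1 - ep) * H j - ∑ l, g l ω j)) ∂P :=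
            integral_finset_sum _ fun j _ => hintEterm j
        _ ≤ ∑ _j : Fin m, (1 : ℝ) := Finset.sum_le_sum fun j _ => stepB j
        _ = (m : ℝ) := by simp
    have hmpos : (0:ℝ) < m := by exact_mod_cast hm1
    have hexp : Real.exp (-(lam * t0)) = (m : ℝ)⁻¹ := by
      have h : lam * t0 = Real.log m := by
        rw [ht0_def]; field_simp
      rw [h, Real.exp_neg, Real.exp_log hmpos]
    have hXint_eq : ∫ ω, Xfun ω ∂P
        = (1 - ep) * (∑ j, p j * H j) - ∫ ω, ∑ l, g l ω (J ω) ∂P := by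
      have h1 : ∫ ω, Xfun ω ∂P = (1 - ep) * (∫ ω, (∑ j, φ j ω * H j) ∂P)
          - ∫ ω, (∑ l, ∑ j, φ j ω * g l ω j) ∂P := by
        rw [hX_def, integral_sub (hintφH.const_mul (1 - ep)) hintSsel, integral_const_mul]
      have h2 : ∫ ω, (∑ l, ∑ j, φ j ω * g l ω j) ∂P = ∫ ω, ∑ l, g l ω (J ω) ∂P := by
        congr 1
        funext ω
        exact (Finset.sum_congr rfl (fun l _ => (hsel (g l) ω).symm))
      rw [h1, h2, stepA2]
    rw [← hXint_eq]
    calc ∫ ω, Xfun ω ∂P ≤ t0 + (Real.exp (-(lam * t0)) / lam) * ∫ ω, Efun ω ∂P := hmainint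
      _ ≤ t0 + (Real.exp (-(lam * t0)) / lam) * (m : ℝ) := by
          refine add_le_add le_rfl (mul_le_mul_of_nonneg_left hEbound ?_)
          positivity
      _ = (Real.log m + 1) / lam := by
          rw [hexp, ht0_def]
          field_simp
  -- final arithmetic
  rw [stepA]
  have hmpos : (0:ℝ) < m := by exact_mod_cast hm1
  have hlogm : Real.log (m:ℝ) ≤ Real.log N := Real.log_le_log hmpos hm
  have hstep : (∑ j, p j * H j) ≤
      (1 + ε) * ((∫ ω, ∑ l, g l ω (J ω) ∂P) + (Real.log m + 1) / lam) := by
    calc (∑ j, p j * H j) = (1 + ε) * ((1 - ep) * (∑ j, p j * H j)) := by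
          rw [← mul_assoc, hepc, one_mul]
      _ ≤ _ := mul_le_mul_of_nonneg_left (by linarith [stepC]) hε1.le
  have hcoef : (1 + ε) * ((Real.log m + 1) / lam)
      = (1 + ε) ^ 2 * (2 * F ^ 2 * a) * (Real.log m + 1) / ε := by
    rw [hlam_def, hep_def, hb_def]
    field_simp
    ring
  have hterm : (1 + ε) * ((Real.log m + 1) / lam)
      ≤ (24 * (1 + ε) ^ 2 / ε) * F ^ 2 * a * Real.log N := by
    rw [hcoef, show (24 * (1 + ε) ^ 2 / ε) * F ^ 2 * a * Real.log N
      = (1 + ε) ^ 2 * (2 * F ^ 2 * a) * (12 * Real.log N) / ε from by ring]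
    gcongr
    linarith
  have hexpand : (1 + ε) * ((∫ ω, ∑ l, g l ω (J ω) ∂P) + (Real.log m + 1) / lam)
      = (1 + ε) * (∫ ω, ∑ l, g l ω (J ω) ∂P) + (1 + ε) * ((Real.log m + 1) / lam) := by
    ring
  linarith [hstep, hterm, hexpand]
end

section
/- Let N ≥ 1 be an integer and D > 0 a real number. On a probability space (Ω,𝔽,P), let ξ_1,…,ξ_N be real random variables and A_1,…,A_N be nonnegative random variables such that E[(√D/√(A_j + D))·exp(2ξ_j²)] ≤ 1 for every j ∈ {1,…,N}. Let J : Ω → {1,…,N} be measurable with E[A_J] ≤ D. Then E[exp(ξ_J²)] ≤ 2^{1/4}·√N, and consequently E[ξ_J²] ≤ (1/4)·log 2 + (1/2)·log N. -/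
open MeasureTheory ProbabilityTheory
open scoped ENNReal

private lemma key_id (D a x : ℝ) (hD : 0 < D) (ha : 0 ≤ a) :
    ((a + D) / D) ^ ((1:ℝ)/4) *
      (Real.sqrt D / Real.sqrt (a + D) * Real.exp (2 * x ^ 2)) ^ ((1:ℝ)/2)
      = Real.exp (x ^ 2) := by
  have had : 0 < a + D := by linarith
  rw [Real.sqrt_eq_rpow, Real.sqrt_eq_rpow,
    Real.mul_rpow (by positivity) (Real.exp_nonneg _),
    Real.div_rpow (by positivity) (by positivity),
    Real.div_rpow (by positivity) (by positivity),
    ← Real.rpow_mul hD.le, ← Real.rpow_mul had.le,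
    ← Real.exp_mul]
  norm_num
  have hx : 2 * x ^ 2 * (1/2) = x ^ 2 := by ring
  have h0 : (a + D) ^ ((1:ℝ)/4) / D ^ ((1:ℝ)/4) * (D ^ ((1:ℝ)/4) / (a + D) ^ ((1:ℝ)/4)) = 1 := by
    rw [div_mul_div_comm, mul_comm, div_self (by positivity)]
  rw [hx, ← mul_assoc, h0, one_mul]

/-- If `E[(√D/√(A_j + D))·exp(2ξ_j²)] ≤ 1` for every `j`, `J` is a
random index with `E[A_J] ≤ D`, then `E[exp(ξ_J²)] ≤ 2^{1/4}·√N` and consequently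
`E[ξ_J²] ≤ (1/4)·log 2 + (1/2)·log N`. -/
theorem maximal_inequality_random_index
    {Ω : Type*} [MeasurableSpace Ω] (P : Measure Ω) [IsProbabilityMeasure P]
    (N : ℕ) (hN : 1 ≤ N) (D : ℝ) (hD : 0 < D)
    (ξ A : Fin N → Ω → ℝ)
    (hξmeas : ∀ j, Measurable (ξ j)) (hAmeas : ∀ j, Measurable (A j))
    (hAnn : ∀ j ω, 0 ≤ A j ω)
    (hmom : ∀ j, ∫⁻ ω, ENNReal.ofReal
        (Real.sqrt D / Real.sqrt (A j ω + D) * Real.exp (2 * (ξ j ω) ^ 2)) ∂P ≤ 1)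
    (J : Ω → Fin N) (hJ : Measurable J)
    (hAJ : ∫⁻ ω, ENNReal.ofReal (A (J ω) ω) ∂P ≤ ENNReal.ofReal D) :
    (∫⁻ ω, ENNReal.ofReal (Real.exp ((ξ (J ω) ω) ^ 2)) ∂P ≤
        ENNReal.ofReal (2 ^ ((1 : ℝ) / 4) * Real.sqrt N)) ∧
      ∫ ω, (ξ (J ω) ω) ^ 2 ∂P ≤ (1 / 4) * Real.log 2 + (1 / 2) * Real.log N := by
  classical
  have hNR : (0:ℝ) < N := by exact_mod_cast hN
  have hsel : ∀ (f : Fin N → Ω → ℝ), (∀ j, Measurable (f j)) →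
      Measurable fun ω => f (J ω) ω := by
    intro f hf
    have h1 : Measurable fun p : Ω × Fin N => f p.2 p.1 :=
      measurable_from_prod_countable_left fun j => hf j
    exact h1.comp (measurable_id.prodMk hJ)
  have hξJ : Measurable fun ω => ξ (J ω) ω := hsel ξ hξmeas
  have hAJm : Measurable fun ω => A (J ω) ω := hsel A hAmeas
  set u : Ω → ℝ≥0∞ := fun ω => ENNReal.ofReal ((A (J ω) ω + D) / D) with hu_def
  set v : Ω → ℝ≥0∞ := fun ω => ENNReal.ofReal
      (Real.sqrt D / Real.sqrt (A (J ω) ω + D) * Real.exp (2 * (ξ (J ω) ω) ^ 2)) with hv_def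
  have hum : Measurable u := ((hAJm.add_const D).div_const D).ennreal_ofReal
  have hvm : Measurable v := by
    apply Measurable.ennreal_ofReal
    have h1 : Measurable fun ω => Real.sqrt (A (J ω) ω + D) :=
      Real.continuous_sqrt.measurable.comp (hAJm.add_const D)
    have h3 : Measurable fun ω => Real.exp (2 * (ξ (J ω) ω) ^ 2) :=
      Real.measurable_exp.comp ((hξJ.pow_const 2).const_mul 2)
    exact (measurable_const.div h1).mul h3
  -- pointwise identity
  have hpt : ∀ ω, ENNReal.ofReal (Real.exp ((ξ (J ω) ω) ^ 2))
      = u ω ^ ((1:ℝ)/4) * v ω ^ ((1:ℝ)/2) := by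
    intro ω
    have ha := hAnn (J ω) ω
    have had : 0 < A (J ω) ω + D := by linarith
    rw [hu_def, hv_def]
    rw [ENNReal.ofReal_rpow_of_pos (by positivity),
        ENNReal.ofReal_rpow_of_pos (by positivity),
        ← ENNReal.ofReal_mul (by positivity), key_id D _ _ hD ha]
  -- Hölder with three functions
  have holder : ∫⁻ ω, ENNReal.ofReal (Real.exp ((ξ (J ω) ω) ^ 2)) ∂P
      ≤ (∫⁻ ω, u ω ∂P) ^ ((1:ℝ)/4) * (∫⁻ ω, v ω ∂P) ^ ((1:ℝ)/2) := by
    have h := ENNReal.lintegral_prod_norm_pow_le (μ := P) Finset.univ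
      (f := ![u, v, fun _ => (1:ℝ≥0∞)]) (p := ![(1:ℝ)/4, 1/2, 1/4])
      (fun i _ => by
        fin_cases i
        · exact hum.aemeasurable
        · exact hvm.aemeasurable
        · exact aemeasurable_const)
      (by simp [Fin.sum_univ_three]; norm_num)
      (fun i _ => by fin_cases i <;> norm_num)
    have hL : ∫⁻ a, ∏ i, ![u, v, fun _ => (1:ℝ≥0∞)] i a ^ ![(1:ℝ)/4, 1/2, 1/4] i ∂P
        = ∫⁻ ω, ENNReal.ofReal (Real.exp ((ξ (J ω) ω) ^ 2)) ∂P := by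
      refine lintegral_congr fun a => ?_
      rw [hpt a]
      simp [Fin.prod_univ_three]
    have hR : ∏ i, (∫⁻ a, ![u, v, fun _ => (1:ℝ≥0∞)] i a ∂P) ^ ![(1:ℝ)/4, 1/2, 1/4] i
        = (∫⁻ ω, u ω ∂P) ^ ((1:ℝ)/4) * (∫⁻ ω, v ω ∂P) ^ ((1:ℝ)/2) := by
      simp [Fin.prod_univ_three, lintegral_one]
    rw [hL, hR] at h
    exact h
  -- bound on ∫u
  have hDne : ENNReal.ofReal D ≠ 0 := by simp [hD]
  have hIu : ∫⁻ ω, u ω ∂P ≤ 2 := by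
    have h1 : ∀ ω, u ω = (ENNReal.ofReal (A (J ω) ω) + ENNReal.ofReal D)
        * (ENNReal.ofReal D)⁻¹ := by
      intro ω
      simp only [hu_def]
      rw [ENNReal.ofReal_div_of_pos hD, ENNReal.ofReal_add (hAnn _ _) hD.le,
        div_eq_mul_inv]
    calc ∫⁻ ω, u ω ∂P
        = ∫⁻ ω, (ENNReal.ofReal (A (J ω) ω) + ENNReal.ofReal D)
            * (ENNReal.ofReal D)⁻¹ ∂P := lintegral_congr h1
      _ = (∫⁻ ω, (ENNReal.ofReal (A (J ω) ω) + ENNReal.ofReal D) ∂P)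
            * (ENNReal.ofReal D)⁻¹ :=
          lintegral_mul_const' _ _ (by simp [hDne])
      _ = ((∫⁻ ω, ENNReal.ofReal (A (J ω) ω) ∂P) + ENNReal.ofReal D)
            * (ENNReal.ofReal D)⁻¹ := by
          rw [lintegral_add_right _ measurable_const, lintegral_const, measure_univ, mul_one]
      _ ≤ (ENNReal.ofReal D + ENNReal.ofReal D) * (ENNReal.ofReal D)⁻¹ := by
          gcongr
      _ = 2 := by
          rw [← two_mul, mul_assoc, ENNReal.mul_inv_cancel hDne ENNReal.ofReal_ne_top, mul_one]
  -- bound on ∫v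
  have hIv : ∫⁻ ω, v ω ∂P ≤ (N : ℝ≥0∞) := by
    have hptv : ∀ ω, v ω ≤ ∑ j : Fin N, ENNReal.ofReal
        (Real.sqrt D / Real.sqrt (A j ω + D) * Real.exp (2 * (ξ j ω) ^ 2)) := by
      intro ω
      simp only [hv_def]
      exact Finset.single_le_sum
        (f := fun j => ENNReal.ofReal
          (Real.sqrt D / Real.sqrt (A j ω + D) * Real.exp (2 * (ξ j ω) ^ 2)))
        (fun j _ => zero_le) (Finset.mem_univ (J ω))
    calc ∫⁻ ω, v ω ∂P
        ≤ ∫⁻ ω, ∑ j : Fin N, ENNReal.ofReal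
            (Real.sqrt D / Real.sqrt (A j ω + D) * Real.exp (2 * (ξ j ω) ^ 2)) ∂P :=
          lintegral_mono hptv
      _ = ∑ j : Fin N, ∫⁻ ω, ENNReal.ofReal
            (Real.sqrt D / Real.sqrt (A j ω + D) * Real.exp (2 * (ξ j ω) ^ 2)) ∂P := by
          refine lintegral_finset_sum _ fun j _ => ?_
          apply Measurable.ennreal_ofReal
          have h1 : Measurable fun ω => Real.sqrt (A j ω + D) :=
            Real.continuous_sqrt.measurable.comp ((hAmeas j).add_const D)
          have h3 : Measurable fun ω => Real.exp (2 * (ξ j ω) ^ 2) :=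
            Real.measurable_exp.comp (((hξmeas j).pow_const 2).const_mul 2)
          exact (measurable_const.div h1).mul h3
      _ ≤ ∑ _j : Fin N, 1 := Finset.sum_le_sum fun j _ => hmom j
      _ = (N : ℝ≥0∞) := by simp
  -- part 1
  have part1 : ∫⁻ ω, ENNReal.ofReal (Real.exp ((ξ (J ω) ω) ^ 2)) ∂P ≤
      ENNReal.ofReal (2 ^ ((1 : ℝ) / 4) * Real.sqrt N) := by
    refine holder.trans ?_
    have h2 : (∫⁻ ω, u ω ∂P) ^ ((1:ℝ)/4) * (∫⁻ ω, v ω ∂P) ^ ((1:ℝ)/2)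
        ≤ (2:ℝ≥0∞) ^ ((1:ℝ)/4) * (N:ℝ≥0∞) ^ ((1:ℝ)/2) :=
      mul_le_mul' (ENNReal.rpow_le_rpow hIu (by norm_num))
        (ENNReal.rpow_le_rpow hIv (by norm_num))
    refine h2.trans_eq ?_
    rw [ENNReal.ofReal_mul (by positivity), Real.sqrt_eq_rpow,
      ← ENNReal.ofReal_rpow_of_pos two_pos, ← ENNReal.ofReal_rpow_of_pos hNR]
    norm_num [ENNReal.ofReal_natCast]
  refine ⟨part1, ?_⟩
  -- part 2
  set C := 2 ^ ((1:ℝ)/4) * Real.sqrt N with hC_def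
  have hCpos : 0 < C := by positivity
  have hFmeas : Measurable fun ω => Real.exp ((ξ (J ω) ω) ^ 2) :=
    Real.measurable_exp.comp (hξJ.pow_const 2)
  have hFint : Integrable (fun ω => Real.exp ((ξ (J ω) ω) ^ 2)) P := by
    refine ⟨hFmeas.aestronglyMeasurable, ?_⟩
    rw [hasFiniteIntegral_iff_ofReal (ae_of_all _ fun ω => (Real.exp_pos _).le)]
    exact lt_of_le_of_lt part1 ENNReal.ofReal_lt_top
  have hIntF_le : ∫ ω, Real.exp ((ξ (J ω) ω) ^ 2) ∂P ≤ C := by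
    rw [integral_eq_lintegral_of_nonneg_ae (ae_of_all _ fun ω => (Real.exp_pos _).le)
      hFmeas.aestronglyMeasurable]
    exact ENNReal.toReal_le_of_le_ofReal hCpos.le part1
  have hξ2int : Integrable (fun ω => (ξ (J ω) ω) ^ 2) P := by
    refine hFint.mono' ((hξJ.pow_const 2).aestronglyMeasurable) (ae_of_all _ fun ω => ?_)
    rw [Real.norm_of_nonneg (sq_nonneg _)]
    have := Real.add_one_le_exp ((ξ (J ω) ω) ^ 2)
    linarith
  have hjen : Real.exp (∫ ω, (ξ (J ω) ω) ^ 2 ∂P) ≤ ∫ ω, Real.exp ((ξ (J ω) ω) ^ 2) ∂P :=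
    convexOn_exp.map_integral_le Real.continuous_exp.continuousOn isClosed_univ
      (ae_of_all _ fun ω => Set.mem_univ _) hξ2int hFint
  have hfin : Real.exp (∫ ω, (ξ (J ω) ω) ^ 2 ∂P) ≤ C := hjen.trans hIntF_le
  have hlog : ∫ ω, (ξ (J ω) ω) ^ 2 ∂P ≤ Real.log C :=
    (Real.le_log_iff_exp_le hCpos).mpr hfin
  refine hlog.trans_eq ?_
  rw [hC_def, Real.log_mul (by positivity) (by positivity),
    Real.log_rpow two_pos, Real.log_sqrt (Nat.cast_nonneg N)]
  ring
end

section
/- Let q ∈ ℕ, let d_0,…,d_{q+1} ∈ ℕ with d_{q+1} = 1, let t_i ≤ d_i and β_i > 0 for i = 0,…,q, let K > 0 and F ≥ K ∨ 1. For i = 0,…,q let g_i = (g_{ij})_{j=1}^{d_{i+1}} : [l_i,u_i]^{d_i} → [l_{i+1},u_{i+1}]^{d_{i+1}} with g_{ij} ∈ C_{t_i}^{β_i}([l_i,u_i]^{d_i}, K) for each j and |l_{i+1}|, |u_{i+1}| ≤ K, where [l_0,u_0] = [0,1]. Assume moreover that each g_i is defined (with the same Hölder bound K) on all of [−K,K]^{d_i}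 for i ≥ 1. Define h_0(x) := g_0(x)/(2K) + 1/2, h_i(x) := g_i(2Kx − K·𝟙)/(2K) + 1/2 for i = 1,…,q−1, and h_q(x) := g_q(2Kx − K·𝟙), where 𝟙 = (1,…,1). Then: (a) g_q ∘ ⋯ ∘ g_0 = h_q ∘ ⋯ ∘ h_0 on [0,1]^{d_0}; (b) h_i maps [0,1]^{d_i} into [0,1]^{d_{i+1}} for i = 0,…,q−1; and (c) h_{ij} ∈ C_{t_i}^{β_i}([0,1]^{d_i}, Q_i) for all i and j, where Q_0 = 1, Q_i = (2F)^{β_i} for i = 1,…,q−1, and Q_q = (2F)^{β_q + 1}. -/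
open MeasureTheory

/-- The cube `[l, u]^p` in `ℝ^p`. -/
def cube (l u : ℝ) (p : ℕ) : Set (Fin p → ℝ) := {x | ∀ i, x i ∈ Set.Icc l u}

/-- Iterated directional (partial) derivatives within a set `S`, along a list of
coordinate directions. -/
noncomputable def pderivChain {p : ℕ} (S : Set (Fin p → ℝ)) :
    List (Fin p) → ((Fin p → ℝ) → ℝ) → (Fin p → ℝ) → ℝ
  | [], f => f
  | i :: tl, f => pderivChain S tl fun x => fderivWithin ℝ f S x (Pi.single i 1)

/-- The partial derivative `∂^α f` within `S` associated with a multi-index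
`α : Fin p → ℕ`. -/
noncomputable def multiPartial {p : ℕ} (S : Set (Fin p → ℝ)) (α : Fin p → ℕ)
    (f : (Fin p → ℝ) → ℝ) : (Fin p → ℝ) → ℝ :=
  pderivChain S ((List.finRange p).flatMap fun i => List.replicate (α i) i) f

/-- The Hölder-type norm of order `β` of `f` on the cube `[l,u]^p`:
`Σ_{|α|₁<β} ‖∂^α f‖_∞ + Σ_{|α|₁=⌊β⌋} sup_{x≠y} |∂^α f(x) − ∂^α f(y)|/|x−y|_∞^{β−⌊β⌋}`. -/
noncomputable def holderNorm {p : ℕ} (l u β : ℝ) (f : (Fin p → ℝ) → ℝ) : ℝ :=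
  (∑ α ∈ (Fintype.piFinset fun _ : Fin p => Finset.range (⌊β⌋₊ + 1)).filter
      (fun α => (∑ i, (α i : ℝ)) < β),
    sSup ((fun x => |multiPartial (cube l u p) α f x|) '' cube l u p))
  + ∑ α ∈ (Fintype.piFinset fun _ : Fin p => Finset.range (⌊β⌋₊ + 1)).filter
      (fun α => ∑ i, α i = ⌊β⌋₊),
    sSup {r : ℝ | ∃ x ∈ cube l u p, ∃ y ∈ cube l u p, x ≠ y ∧
      r = |multiPartial (cube l u p) α f x - multiPartial (cube l u p) α f y| /
        ‖x - y‖ ^ (β - ⌊β⌋₊)}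

/-- Membership in the Hölder ball `C_r^β([l,u]^p, K)`: `f` depends on at most `r`
coordinates on the cube, is of class `C^{⌊β⌋}` there, and has Hölder norm at most `K`. -/
def memHolderClass {p : ℕ} (r : ℕ) (β K l u : ℝ) (f : (Fin p → ℝ) → ℝ) : Prop :=
  (∃ T : Finset (Fin p), T.card ≤ r ∧ ∀ x ∈ cube l u p, ∀ y ∈ cube l u p,
    (∀ i ∈ T, x i = y i) → f x = f y) ∧
  ContDiffOn ℝ (⌊β⌋₊ : ℕ∞) f (cube l u p) ∧
  holderNorm l u β f ≤ K

/-- Composition `g_q ∘ ⋯ ∘ g_0` of a chain of functions `g_i : ℝ^{d_i} → ℝ^{d_{i+1}}`. -/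
def compChain (dm : ℕ → ℕ) (g : ∀ i : ℕ, (Fin (dm i) → ℝ) → Fin (dm (i + 1)) → ℝ) :
    (q : ℕ) → (Fin (dm 0) → ℝ) → Fin (dm (q + 1)) → ℝ
  | 0 => g 0
  | q + 1 => fun x => g (q + 1) (compChain dm g q x)

/- ### Auxiliary lemmas -/

lemma cube_eq_pi (l u : ℝ) (p : ℕ) :
    cube l u p = Set.pi Set.univ (fun _ : Fin p => Set.Icc l u) := by
  ext x; simp only [cube, Set.mem_setOf_eq, Set.mem_univ_pi]

lemma uniqueDiffOn_cube {p : ℕ} {l u : ℝ} (h : l < u) : UniqueDiffOn ℝ (cube l u p) := by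
  rw [cube_eq_pi]
  exact UniqueDiffOn.pi fun i _ => uniqueDiffOn_Icc h

lemma isCompact_cube (l u : ℝ) (p : ℕ) : IsCompact (cube l u p) := by
  rw [cube_eq_pi]; exact isCompact_univ_pi fun _ => isCompact_Icc

lemma length_multiList {p : ℕ} (α : Fin p → ℕ) :
    ((List.finRange p).flatMap fun i => List.replicate (α i) i).length = ∑ i, α i := by
  simp [List.length_flatMap, Fin.sum_univ_def, Function.comp_def]

lemma multiPartial_zero {p : ℕ} (S : Set (Fin p → ℝ)) (f : (Fin p → ℝ) → ℝ) :
    multiPartial S (fun _ => 0) f = f := by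
  have : ((List.finRange p).flatMap fun i => List.replicate ((fun _ => 0 : Fin p → ℕ) i) i)
      = [] := by simp
  rw [multiPartial, this]
  rfl

lemma real_sSup_smul_le (t : ℝ) (ht : 0 < t) (s : Set ℝ) (hs : ∀ x ∈ s, 0 ≤ x) :
    sSup ((fun x => t * x) '' s) ≤ t * sSup s := by
  by_cases hb : BddAbove s
  · refine Real.sSup_le ?_ (mul_nonneg ht.le (Real.sSup_nonneg hs))
    rintro y ⟨x, hx, rfl⟩
    exact mul_le_mul_of_nonneg_left (le_csSup hb hx) ht.le
  · have hb' : ¬ BddAbove ((fun x => t * x) '' s) := by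
      intro ⟨M, hM⟩
      exact hb ⟨M / t, fun x hx => (le_div_iff₀ ht).2 (by simpa [mul_comm] using hM ⟨x, hx, rfl⟩)⟩
    rw [Real.sSup_of_not_bddAbove hb', Real.sSup_of_not_bddAbove hb, mul_zero]

lemma pderivChain_congr {p : ℕ} {S : Set (Fin p → ℝ)} :
    ∀ (L : List (Fin p)) {f₁ f₂ : (Fin p → ℝ) → ℝ}, Set.EqOn f₁ f₂ S →
      Set.EqOn (pderivChain S L f₁) (pderivChain S L f₂) S
  | [], f₁, f₂, h => h
  | i :: L, f₁, f₂, h => by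
    apply pderivChain_congr L
    intro x hx
    simp only
    rw [fderivWithin_congr h (h hx)]

lemma pderivChain_contOn {p : ℕ} {S : Set (Fin p → ℝ)} (hS : UniqueDiffOn ℝ S) :
    ∀ (L : List (Fin p)) (f : (Fin p → ℝ) → ℝ),
      ContDiffOn ℝ (L.length : ℕ∞) f S → ContinuousOn (pderivChain S L f) S
  | [], f, hf => hf.continuousOn
  | i :: L, f, hf => by
    apply pderivChain_contOn hS L
    have h1 : ContDiffOn ℝ (L.length : ℕ∞) (fun x => fderivWithin ℝ f S x) S := by
      apply hf.fderivWithin hS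
      rw [List.length_cons]
      push_cast
      rfl
    exact h1.clm_apply contDiffOn_const

lemma hasFDerivAt_affineMap {p : ℕ} (a b : ℝ) (z : Fin p → ℝ) :
    HasFDerivAt (fun x : Fin p → ℝ => fun k => a * x k + b)
      (a • ContinuousLinearMap.id ℝ (Fin p → ℝ)) z := by
  have : (fun x : Fin p → ℝ => fun k => a * x k + b)
      = fun x => a • x + Function.const (Fin p) b := by
    funext x k; simp [Function.const, smul_eq_mul]
  rw [this]
  exact ((hasFDerivAt_id z).const_smul a).add_const _

lemma pderivChain_affine {p : ℕ} {S S' : Set (Fin p → ℝ)}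
    (hS : UniqueDiffOn ℝ S) (hS' : UniqueDiffOn ℝ S') {a b : ℝ}
    (hA : Set.MapsTo (fun x : Fin p → ℝ => fun k => a * x k + b) S S') :
    ∀ (L : List (Fin p)) (f : (Fin p → ℝ) → ℝ),
      ContDiffOn ℝ (L.length : ℕ∞) f S' → ∀ (c e : ℝ), ∀ x ∈ S,
      pderivChain S L (fun x => c * f (fun k => a * x k + b) + e) x
        = c * a ^ L.length * pderivChain S' L f (fun k => a * x k + b)
          + (if L = [] then e else 0)
  | [], f, hf, c, e, x, hx => by simp [pderivChain]
  | i :: L, f, hf, c, e, x, hx => by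
    have hlen : ((L.length + 1 : ℕ) : ℕ∞) = ((i :: L).length : ℕ∞) := by
      rw [List.length_cons]
    have hf1 : ContDiffOn ℝ ((L.length + 1 : ℕ) : ℕ∞) f S' := by rw [hlen]; exact hf
    have hdiff : DifferentiableOn ℝ f S' := by
      apply hf1.differentiableOn
      simp
    set A : (Fin p → ℝ) → (Fin p → ℝ) := fun x => fun k => a * x k + b with hAdef
    set f' : (Fin p → ℝ) → ℝ := fun y => fderivWithin ℝ f S' y (Pi.single i 1) with hf'def
    have hf'cd : ContDiffOn ℝ (L.length : ℕ∞) f' S' := by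
      have h1 : ContDiffOn ℝ (L.length : ℕ∞) (fun y => fderivWithin ℝ f S' y) S' := by
        apply hf1.fderivWithin hS'
        push_cast; rfl
      exact h1.clm_apply contDiffOn_const
    have key : Set.EqOn
        (fun x => fderivWithin ℝ (fun x => c * f (A x) + e) S x (Pi.single i 1))
        (fun x => (c * a) * f' (A x) + 0) S := by
      intro z hz
      have hdz : DifferentiableWithinAt ℝ f S' (A z) := hdiff (A z) (hA hz)
      have h1 : HasFDerivWithinAt f (fderivWithin ℝ f S' (A z)) S' (A z) :=
        hdz.hasFDerivWithinAt
      have h2 : HasFDerivWithinAt (f ∘ A)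
          ((fderivWithin ℝ f S' (A z)).comp (a • ContinuousLinearMap.id ℝ (Fin p → ℝ))) S z :=
        h1.comp z ((hasFDerivAt_affineMap a b z).hasFDerivWithinAt) hA
      have h3 : HasFDerivWithinAt (fun x => c * f (A x) + e)
          (c • ((fderivWithin ℝ f S' (A z)).comp
            (a • ContinuousLinearMap.id ℝ (Fin p → ℝ)))) S z :=
        (h2.const_mul c).add_const e
      simp only
      rw [h3.fderivWithin (hS z hz)]
      simp [f', smul_eq_mul, _root_.map_smul]
      ring
    calc pderivChain S (i :: L) (fun x => c * f (A x) + e) x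
        = pderivChain S L (fun x => (c * a) * f' (A x) + 0) x :=
          pderivChain_congr L key hx
      _ = (c * a) * a ^ L.length * pderivChain S' L f' (A x) + (if L = [] then 0 else 0) :=
          pderivChain_affine hS hS' hA L f' hf'cd (c * a) 0 x hx
      _ = c * a ^ (i :: L).length * pderivChain S' (i :: L) f (A x)
          + (if (i :: L) = [] then e else 0) := by
          simp only [pderivChain, List.length_cons, List.cons_ne_nil, if_false, if_pos rfl,
            add_zero, pow_succ, ite_self]
          ring

lemma mapsTo_affine_cube {p : ℕ} {a b : ℝ} (ha : 0 < a) :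
    Set.MapsTo (fun x : Fin p → ℝ => fun k => a * x k + b) (cube 0 1 p) (cube b (a + b) p) := by
  intro x hx k
  have h := hx k
  simp only [Set.mem_Icc] at h ⊢
  constructor <;> nlinarith [h.1, h.2]

lemma affine_cube_surj {p : ℕ} {a b : ℝ} (ha : 0 < a) {y : Fin p → ℝ}
    (hy : y ∈ cube b (a + b) p) :
    ∃ x ∈ cube 0 1 p, (fun k => a * x k + b) = y := by
  refine ⟨fun k => (y k - b) / a, fun k => ?_, ?_⟩
  · have h := hy k
    simp only [Set.mem_Icc] at h ⊢
    constructor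
    · exact div_nonneg (by linarith [h.1]) ha.le
    · rw [div_le_one ha]; linarith [h.2]
  · funext k; field_simp; ring

lemma multiPartial_affine {p : ℕ} {a b : ℝ} (ha : 0 < a) (α : Fin p → ℕ)
    (f : (Fin p → ℝ) → ℝ)
    (hf : ContDiffOn ℝ ((∑ i, α i : ℕ) : ℕ∞) f (cube b (a + b) p)) (c e : ℝ)
    {x : Fin p → ℝ} (hx : x ∈ cube 0 1 p) :
    multiPartial (cube 0 1 p) α (fun x => c * f (fun k => a * x k + b) + e) x
      = c * a ^ (∑ i, α i) * multiPartial (cube b (a + b) p) α f (fun k => a * x k + b)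
        + (if (∑ i, α i) = 0 then e else 0) := by
  have hlt : b < a + b := by linarith
  have hL := length_multiList α
  have hf' : ContDiffOn ℝ
      ((((List.finRange p).flatMap fun i => List.replicate (α i) i).length : ℕ)
        : ℕ∞) f (cube b (a + b) p) := by rw [hL]; exact hf
  have h := pderivChain_affine (uniqueDiffOn_cube one_pos) (uniqueDiffOn_cube hlt)
    (mapsTo_affine_cube ha) _ f hf' c e x hx
  rw [multiPartial, multiPartial, h, hL]
  congr 1
  by_cases hz : (∑ i, α i) = 0
  · rw [if_pos hz, if_pos (by rw [← List.length_eq_zero_iff, hL, hz])]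
  · rw [if_neg hz, if_neg (by
      intro hnil
      exact hz (by rw [← hL, hnil, List.length_nil]))]

lemma holderNorm_affine_le {p : ℕ} {β a b c e : ℝ} (hβ : 0 < β) (ha : 0 < a)
    (f : (Fin p → ℝ) → ℝ) (hf : ContDiffOn ℝ (⌊β⌋₊ : ℕ∞) f (cube b (a + b) p)) :
    holderNorm 0 1 β (fun x => c * f (fun k => a * x k + b) + e)
      ≤ |e| + |c| * max 1 (a ^ β) * holderNorm b (a + b) β f := by
  have hlt : b < a + b := by linarith
  set C := |c| * max 1 (a ^ β) with hC
  have hC0 : 0 ≤ C := mul_nonneg (abs_nonneg c) (le_trans zero_le_one (le_max_left _ _))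
  have hcoef : ∀ m : ℕ, (m : ℝ) ≤ β → |c| * a ^ m ≤ C := by
    intro m hm
    rcases le_or_gt a 1 with h1 | h1
    · exact mul_le_mul_of_nonneg_left
        (le_trans (pow_le_one₀ ha.le h1) (le_max_left _ _)) (abs_nonneg c)
    · have h2 : a ^ m ≤ a ^ β := by
        rw [← Real.rpow_natCast a m]
        exact Real.rpow_le_rpow_of_exponent_le h1.le hm
      exact mul_le_mul_of_nonneg_left (h2.trans (le_max_right _ _)) (abs_nonneg c)
  have hcont : ∀ α : Fin p → ℕ, (∑ i, α i) ≤ ⌊β⌋₊ →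
      ContinuousOn (multiPartial (cube b (a + b) p) α f) (cube b (a + b) p) := by
    intro α hαn
    apply pderivChain_contOn (uniqueDiffOn_cube hlt)
    rw [length_multiList]
    exact hf.of_le (by exact_mod_cast hαn)
  have hbdd : ∀ α : Fin p → ℕ, (∑ i, α i) ≤ ⌊β⌋₊ →
      BddAbove ((fun x => |multiPartial (cube b (a + b) p) α f x|) '' cube b (a + b) p) :=
    fun α hαn =>
      ((isCompact_cube _ _ _).image_of_continuousOn ((hcont α hαn).abs)).bddAbove
  have hMnonneg : ∀ α : Fin p → ℕ,
      0 ≤ sSup ((fun x => |multiPartial (cube b (a + b) p) α f x|) '' cube b (a + b) p) := by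
    intro α
    apply Real.sSup_nonneg
    rintro y ⟨x, hx, rfl⟩
    exact abs_nonneg _
  have hHnonneg : ∀ α : Fin p → ℕ,
      0 ≤ sSup {r : ℝ | ∃ x ∈ cube b (a + b) p, ∃ y ∈ cube b (a + b) p, x ≠ y ∧
        r = |multiPartial (cube b (a + b) p) α f x - multiPartial (cube b (a + b) p) α f y| /
          ‖x - y‖ ^ (β - ⌊β⌋₊)} := by
    intro α
    apply Real.sSup_nonneg
    rintro r ⟨x, hx, y, hy, hxy, rfl⟩
    exact div_nonneg (abs_nonneg _) (Real.rpow_nonneg (norm_nonneg _) _)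
  -- per-term bound for the sup-norm part
  have hterm1 : ∀ α ∈ (Fintype.piFinset fun _ : Fin p => Finset.range (⌊β⌋₊ + 1)).filter
      (fun α => (∑ i, (α i : ℝ)) < β),
      sSup ((fun x =>
          |multiPartial (cube 0 1 p) α (fun x => c * f (fun k => a * x k + b) + e) x|)
        '' cube 0 1 p)
      ≤ C * sSup ((fun x => |multiPartial (cube b (a + b) p) α f x|) '' cube b (a + b) p)
        + (if (∑ i, α i) = 0 then |e| else 0) := by
    intro α hα
    have hflt : (∑ i, (α i : ℝ)) < β := (Finset.mem_filter.1 hα).2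
    have hle : ((∑ i, α i : ℕ) : ℝ) ≤ β := by push_cast; exact hflt.le
    have hαn : (∑ i, α i) ≤ ⌊β⌋₊ := Nat.le_floor hle
    have hitng : 0 ≤ (if (∑ i, α i) = 0 then |e| else 0) := by
      split_ifs
      · exact abs_nonneg e
      · exact le_refl 0
    apply Real.sSup_le
    · rintro y ⟨x, hx, rfl⟩
      simp only
      rw [multiPartial_affine ha α f (hf.of_le (by exact_mod_cast hαn)) c e hx]
      have habs : |c * a ^ (∑ i, α i) *
            multiPartial (cube b (a + b) p) α f (fun k => a * x k + b)
            + (if (∑ i, α i) = 0 then e else 0)|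
          ≤ |c| * a ^ (∑ i, α i) *
            |multiPartial (cube b (a + b) p) α f (fun k => a * x k + b)|
            + (if (∑ i, α i) = 0 then |e| else 0) := by
        refine (abs_add_le _ _).trans (add_le_add ?_ ?_)
        · rw [abs_mul, abs_mul, abs_of_pos (pow_pos ha _)]
        · split_ifs <;> simp
      refine habs.trans (add_le_add_left ?_ _)
      have hmem : |multiPartial (cube b (a + b) p) α f (fun k => a * x k + b)|
          ≤ sSup ((fun x => |multiPartial (cube b (a + b) p) α f x|) '' cube b (a + b) p) :=
        le_csSup (hbdd α hαn) ⟨_, mapsTo_affine_cube ha hx, rfl⟩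
      calc |c| * a ^ (∑ i, α i) *
            |multiPartial (cube b (a + b) p) α f (fun k => a * x k + b)|
          ≤ (|c| * a ^ (∑ i, α i)) *
            sSup ((fun x => |multiPartial (cube b (a + b) p) α f x|) '' cube b (a + b) p) :=
            mul_le_mul_of_nonneg_left hmem
              (mul_nonneg (abs_nonneg c) (pow_pos ha _).le)
        _ ≤ C * sSup ((fun x => |multiPartial (cube b (a + b) p) α f x|) '' cube b (a + b) p) :=
            mul_le_mul_of_nonneg_right (hcoef _ hle) (hMnonneg α)
    · exact add_nonneg (mul_nonneg hC0 (hMnonneg α)) hitng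
  
  -- per-term bound for the Hölder part
  have hterm2 : ∀ α ∈ (Fintype.piFinset fun _ : Fin p => Finset.range (⌊β⌋₊ + 1)).filter
      (fun α => ∑ i, α i = ⌊β⌋₊),
      sSup {r : ℝ | ∃ x ∈ cube 0 1 p, ∃ y ∈ cube 0 1 p, x ≠ y ∧
        r = |multiPartial (cube 0 1 p) α (fun x => c * f (fun k => a * x k + b) + e) x -
            multiPartial (cube 0 1 p) α (fun x => c * f (fun k => a * x k + b) + e) y| /
          ‖x - y‖ ^ (β - ⌊β⌋₊)}
      ≤ C * sSup {r : ℝ | ∃ x ∈ cube b (a + b) p, ∃ y ∈ cube b (a + b) p, x ≠ y ∧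
        r = |multiPartial (cube b (a + b) p) α f x - multiPartial (cube b (a + b) p) α f y| /
          ‖x - y‖ ^ (β - ⌊β⌋₊)} := by
    intro α hα
    have hαn : (∑ i, α i) = ⌊β⌋₊ := (Finset.mem_filter.1 hα).2
    have hfα : ContDiffOn ℝ ((∑ i, α i : ℕ) : ℕ∞) f (cube b (a + b) p) := by
      rw [hαn]; exact hf
    set t := |c| * a ^ β with ht
    have htC : t ≤ C :=
      mul_le_mul_of_nonneg_left (le_max_right _ _) (abs_nonneg c)
    have key : ∀ x ∈ cube 0 1 p, ∀ y ∈ cube 0 1 p, x ≠ y →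
        |multiPartial (cube 0 1 p) α (fun x => c * f (fun k => a * x k + b) + e) x -
            multiPartial (cube 0 1 p) α (fun x => c * f (fun k => a * x k + b) + e) y| /
          ‖x - y‖ ^ (β - ⌊β⌋₊)
        = t * (|multiPartial (cube b (a + b) p) α f (fun k => a * x k + b) -
              multiPartial (cube b (a + b) p) α f (fun k => a * y k + b)| /
            ‖(fun k => a * x k + b) - (fun k => a * y k + b)‖ ^ (β - ⌊β⌋₊)) := by
      intro x hx y hy hxy
      rw [multiPartial_affine ha α f hfα c e hx, multiPartial_affine ha α f hfα c e hy]
      have hnorm : ‖(fun k => a * x k + b) - (fun k => a * y k + b)‖ = a * ‖x - y‖ := by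
        have h1 : (fun k => a * x k + b) - (fun k => a * y k + b) = a • (x - y) := by
          funext k
          simp only [Pi.sub_apply, Pi.smul_apply, smul_eq_mul]
          ring
        rw [h1, norm_smul, Real.norm_eq_abs, abs_of_pos ha]
      have hcancel : (c * a ^ (∑ i, α i) *
            multiPartial (cube b (a + b) p) α f (fun k => a * x k + b)
            + (if (∑ i, α i) = 0 then e else 0)) -
          (c * a ^ (∑ i, α i) *
            multiPartial (cube b (a + b) p) α f (fun k => a * y k + b)
            + (if (∑ i, α i) = 0 then e else 0))
          = c * a ^ (∑ i, α i) *
            (multiPartial (cube b (a + b) p) α f (fun k => a * x k + b) -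
             multiPartial (cube b (a + b) p) α f (fun k => a * y k + b)) := by ring
      rw [hcancel, abs_mul, abs_mul, abs_of_pos (pow_pos ha _), hnorm,
        Real.mul_rpow ha.le (norm_nonneg _)]
      have hxys : x - y ≠ 0 := sub_ne_zero.2 hxy
      have hden : (0:ℝ) < ‖x - y‖ ^ (β - ⌊β⌋₊) :=
        Real.rpow_pos_of_pos (norm_pos_iff.2 hxys) _
      have haden : (0:ℝ) < a ^ (β - (⌊β⌋₊:ℝ)) := Real.rpow_pos_of_pos ha _
      have hsplit : a ^ β = a ^ (∑ i, α i) * a ^ (β - (⌊β⌋₊:ℝ)) := by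
        rw [← Real.rpow_natCast a (∑ i, α i), ← Real.rpow_add ha]
        congr 1
        rw [hαn]
        ring
      rw [ht, hsplit]
      field_simp
    by_cases hc : c = 0
    · have ht0 : t = 0 := by rw [ht, hc, abs_zero, zero_mul]
      refine Real.sSup_le ?_ (mul_nonneg hC0 (hHnonneg α))
      rintro r ⟨x, hx, y, hy, hxy, rfl⟩
      rw [key x hx y hy hxy, ht0, zero_mul]
      exact mul_nonneg hC0 (hHnonneg α)
    · have ht0 : 0 < t := mul_pos (abs_pos.2 hc) (Real.rpow_pos_of_pos ha _)
      have hseteq : {r : ℝ | ∃ x ∈ cube 0 1 p, ∃ y ∈ cube 0 1 p, x ≠ y ∧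
          r = |multiPartial (cube 0 1 p) α (fun x => c * f (fun k => a * x k + b) + e) x -
              multiPartial (cube 0 1 p) α (fun x => c * f (fun k => a * x k + b) + e) y| /
            ‖x - y‖ ^ (β - ⌊β⌋₊)}
          = (fun r => t * r) '' {r : ℝ | ∃ x ∈ cube b (a + b) p, ∃ y ∈ cube b (a + b) p,
              x ≠ y ∧ r = |multiPartial (cube b (a + b) p) α f x -
                multiPartial (cube b (a + b) p) α f y| / ‖x - y‖ ^ (β - ⌊β⌋₊)} := by
        ext r
        simp only [Set.mem_setOf_eq, Set.mem_image]
        constructor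
        · rintro ⟨x, hx, y, hy, hxy, rfl⟩
          have hAxy : (fun k => a * x k + b) ≠ (fun k => a * y k + b) := by
            intro hEq
            apply hxy
            funext k
            have h2 := congrFun hEq k
            nlinarith [h2]
          exact ⟨_, ⟨_, mapsTo_affine_cube ha hx, _, mapsTo_affine_cube ha hy, hAxy, rfl⟩,
            (key x hx y hy hxy).symm⟩
        · rintro ⟨r', ⟨x', hx', y', hy', hxy', rfl⟩, rfl⟩
          obtain ⟨x, hx, hAx⟩ := affine_cube_surj ha hx'
          obtain ⟨y, hy, hAy⟩ := affine_cube_surj ha hy'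
          have hxy : x ≠ y := by
            intro hEq
            exact hxy' (by rw [← hAx, ← hAy, hEq])
          refine ⟨x, hx, y, hy, hxy, ?_⟩
          rw [key x hx y hy hxy, hAx, hAy]
      rw [hseteq]
      calc sSup ((fun r => t * r) '' _)
          ≤ t * sSup _ := real_sSup_smul_le t ht0 _ (by
            rintro r ⟨x, hx, y, hy, hxy, rfl⟩
            exact div_nonneg (abs_nonneg _) (Real.rpow_nonneg (norm_nonneg _) _))
        _ ≤ C * _ := mul_le_mul_of_nonneg_right htC (hHnonneg α)
  -- assembling
  have hite : (∑ α ∈ (Fintype.piFinset fun _ : Fin p => Finset.range (⌊β⌋₊ + 1)).filter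
      (fun α => (∑ i, (α i : ℝ)) < β), if (∑ i, α i) = 0 then |e| else 0) ≤ |e| := by
    have hrw : ∀ α ∈ (Fintype.piFinset fun _ : Fin p => Finset.range (⌊β⌋₊ + 1)).filter
        (fun α => (∑ i, (α i : ℝ)) < β),
        (if (∑ i, α i) = 0 then |e| else 0)
          = (if α = (fun _ => 0) then |e| else 0) := by
      intro α _
      refine if_congr ?_ rfl rfl
      rw [Finset.sum_eq_zero_iff]
      constructor
      · intro h; funext i; exact h i (Finset.mem_univ i)
      · intro h i _; rw [h]
    rw [Finset.sum_congr rfl hrw, Finset.sum_ite_eq' _ (fun _ => 0) (fun _ => |e|)]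
    split_ifs
    · exact le_refl _
    · exact abs_nonneg e
  unfold holderNorm
  calc (∑ α ∈ (Fintype.piFinset fun _ : Fin p => Finset.range (⌊β⌋₊ + 1)).filter
        (fun α => (∑ i, (α i : ℝ)) < β),
        sSup ((fun x =>
          |multiPartial (cube 0 1 p) α (fun x => c * f (fun k => a * x k + b) + e) x|)
          '' cube 0 1 p))
      + ∑ α ∈ (Fintype.piFinset fun _ : Fin p => Finset.range (⌊β⌋₊ + 1)).filter
        (fun α => ∑ i, α i = ⌊β⌋₊),
        sSup {r : ℝ | ∃ x ∈ cube 0 1 p, ∃ y ∈ cube 0 1 p, x ≠ y ∧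
          r = |multiPartial (cube 0 1 p) α (fun x => c * f (fun k => a * x k + b) + e) x -
              multiPartial (cube 0 1 p) α (fun x => c * f (fun k => a * x k + b) + e) y| /
            ‖x - y‖ ^ (β - ⌊β⌋₊)}
      ≤ (∑ α ∈ (Fintype.piFinset fun _ : Fin p => Finset.range (⌊β⌋₊ + 1)).filter
        (fun α => (∑ i, (α i : ℝ)) < β),
        (C * sSup ((fun x => |multiPartial (cube b (a + b) p) α f x|) '' cube b (a + b) p)
          + (if (∑ i, α i) = 0 then |e| else 0)))
      + ∑ α ∈ (Fintype.piFinset fun _ : Fin p => Finset.range (⌊β⌋₊ + 1)).filter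
        (fun α => ∑ i, α i = ⌊β⌋₊),
        C * sSup {r : ℝ | ∃ x ∈ cube b (a + b) p, ∃ y ∈ cube b (a + b) p, x ≠ y ∧
          r = |multiPartial (cube b (a + b) p) α f x -
            multiPartial (cube b (a + b) p) α f y| / ‖x - y‖ ^ (β - ⌊β⌋₊)} :=
        add_le_add (Finset.sum_le_sum hterm1) (Finset.sum_le_sum hterm2)
    _ ≤ |e| + C * (holderNorm b (a + b) β f) := by
        rw [Finset.sum_add_distrib]
        unfold holderNorm
        rw [mul_add, ← Finset.mul_sum, ← Finset.mul_sum]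
        have := hite
        linarith [hite]


lemma contDiffOn_affine_comp {p : ℕ} {a b : ℝ} (c e : ℝ) (ha : 0 < a) {n : ℕ∞}
    (f : (Fin p → ℝ) → ℝ) (hf : ContDiffOn ℝ n f (cube b (a + b) p)) :
    ContDiffOn ℝ n (fun x => c * f (fun k => a * x k + b) + e) (cube 0 1 p) := by
  have hA : ContDiff ℝ n (fun x : Fin p → ℝ => fun k => a * x k + b) := by
    apply contDiff_pi.2
    intro k
    exact (contDiff_const.mul ((ContinuousLinearMap.proj k :
      (Fin p → ℝ) →L[ℝ] ℝ).contDiff)).add contDiff_const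
  have h1 : ContDiffOn ℝ n (fun x => f (fun k => a * x k + b)) (cube 0 1 p) :=
    hf.comp hA.contDiffOn (mapsTo_affine_cube ha)
  exact (contDiffOn_const.mul h1).add contDiffOn_const

lemma memHolderClass_renorm {p r : ℕ} {β K' a b : ℝ} (c e : ℝ) (hβ : 0 < β) (ha : 0 < a)
    {f : (Fin p → ℝ) → ℝ} (hf : memHolderClass r β K' b (a + b) f) :
    memHolderClass r β (|e| + |c| * max 1 (a ^ β) * K') 0 1
      (fun x => c * f (fun k => a * x k + b) + e) := by
  obtain ⟨⟨T, hT, hTdep⟩, hcd, hnorm⟩ := hf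
  refine ⟨⟨T, hT, ?_⟩, contDiffOn_affine_comp c e ha f hcd, ?_⟩
  · intro x hx y hy hxy
    have h1 : f (fun k => a * x k + b) = f (fun k => a * y k + b) :=
      hTdep _ (mapsTo_affine_cube ha hx) _ (mapsTo_affine_cube ha hy)
        (fun i hi => by show a * x i + b = a * y i + b; rw [hxy i hi])
    simp only [h1]
  · refine (holderNorm_affine_le hβ ha f hcd).trans ?_
    have h2 : 0 ≤ |c| * max 1 (a ^ β) :=
      mul_nonneg (abs_nonneg c) (le_trans zero_le_one (le_max_left _ _))
    exact add_le_add_right (mul_le_mul_of_nonneg_left hnorm h2) _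

lemma memHolderClass_mono {p r : ℕ} {β K₁ K₂ l u : ℝ} (h : K₁ ≤ K₂)
    {f : (Fin p → ℝ) → ℝ} (hf : memHolderClass r β K₁ l u f) :
    memHolderClass r β K₂ l u f :=
  ⟨hf.1, hf.2.1, hf.2.2.trans h⟩

lemma abs_le_of_memHolderClass {p r : ℕ} {β K' l u : ℝ} (hβ : 0 < β)
    {f : (Fin p → ℝ) → ℝ} (hf : memHolderClass r β K' l u f) :
    ∀ x ∈ cube l u p, |f x| ≤ K' := by
  obtain ⟨_, hcd, hnorm⟩ := hf
  intro x hx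
  have hcont : ContinuousOn f (cube l u p) := hcd.continuousOn
  have hbdd : BddAbove ((fun x => |f x|) '' cube l u p) :=
    ((isCompact_cube _ _ _).image_of_continuousOn hcont.abs).bddAbove
  have h1 : |f x| ≤ sSup ((fun x => |f x|) '' cube l u p) := le_csSup hbdd ⟨x, hx, rfl⟩
  have hmem0 : (fun _ => 0 : Fin p → ℕ) ∈
      (Fintype.piFinset fun _ : Fin p => Finset.range (⌊β⌋₊ + 1)).filter
        (fun α => (∑ i, (α i : ℝ)) < β) := by
    rw [Finset.mem_filter]
    constructor
    · rw [Fintype.mem_piFinset]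
      intro i
      exact Finset.mem_range.2 (Nat.succ_pos _)
    · simpa using hβ
  have h2 : sSup ((fun x => |multiPartial (cube l u p) (fun _ => 0) f x|) '' cube l u p)
      ≤ holderNorm l u β f := by
    unfold holderNorm
    have hterm : sSup ((fun x => |multiPartial (cube l u p) (fun _ => 0) f x|) '' cube l u p)
        ≤ ∑ α ∈ (Fintype.piFinset fun _ : Fin p => Finset.range (⌊β⌋₊ + 1)).filter
          (fun α => (∑ i, (α i : ℝ)) < β),
          sSup ((fun x => |multiPartial (cube l u p) α f x|) '' cube l u p) :=
      Finset.single_le_sum (f := fun α =>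
          sSup ((fun x => |multiPartial (cube l u p) α f x|) '' cube l u p))
        (fun α _ => Real.sSup_nonneg (by rintro y ⟨z, hz, rfl⟩; exact abs_nonneg _)) hmem0
    have hsum2 : 0 ≤ ∑ α ∈ (Fintype.piFinset fun _ : Fin p => Finset.range (⌊β⌋₊ + 1)).filter
        (fun α => ∑ i, α i = ⌊β⌋₊),
        sSup {r : ℝ | ∃ x ∈ cube l u p, ∃ y ∈ cube l u p, x ≠ y ∧
          r = |multiPartial (cube l u p) α f x - multiPartial (cube l u p) α f y| /
            ‖x - y‖ ^ (β - ⌊β⌋₊)} :=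
      Finset.sum_nonneg fun α _ => Real.sSup_nonneg (by
        rintro r ⟨z, hz, w, hw, hzw, rfl⟩
        exact div_nonneg (abs_nonneg _) (Real.rpow_nonneg (norm_nonneg _) _))
    linarith
  rw [multiPartial_zero] at h2
  exact h1.trans (h2.trans hnorm)


/-- Step 1 of the proof of Lemma A.1. A compositional Hölder function
`g_q ∘ ⋯ ∘ g_0` can be rewritten as a composition `h_q ∘ ⋯ ∘ h_0` of Hölder functions
mapping the unit cube into itself, with controlled Hölder constants `Q_i`. -/
theorem composition_renormalization
    (q : ℕ) (hq : 1 ≤ q) (dm t : ℕ → ℕ) (βs : ℕ → ℝ) (K Fb : ℝ)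
    (hdq : dm (q + 1) = 1)
    (ht : ∀ i ≤ q, 1 ≤ t i ∧ t i ≤ dm i) (hβ : ∀ i ≤ q, 0 < βs i)
    (hK : 0 < K) (hFb : max K 1 ≤ Fb)
    (l u : ℕ → ℝ) (hl0 : l 0 = 0) (hu0 : u 0 = 1) (hlu : ∀ i ≤ q, l i < u i)
    (hluK : ∀ i ≤ q, |l (i + 1)| ≤ K ∧ |u (i + 1)| ≤ K)
    (g : ∀ i : ℕ, (Fin (dm i) → ℝ) → Fin (dm (i + 1)) → ℝ)
    (hgmaps : ∀ i ≤ q, Set.MapsTo (g i) (cube (l i) (u i) (dm i))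
      (cube (l (i + 1)) (u (i + 1)) (dm (i + 1))))
    (hghol : ∀ i ≤ q, ∀ j, memHolderClass (t i) (βs i) K (l i) (u i) fun x => g i x j)
    -- each `g_i`, `i ≥ 1`, is moreover defined (with the same Hölder bound `K`)
    -- on all of `[−K, K]^{d_i}`
    (hgholK : ∀ i, 1 ≤ i → i ≤ q → ∀ j,
      memHolderClass (t i) (βs i) K (-K) K fun x => g i x j)
    -- the renormalized functions h_i
    (H : ∀ i : ℕ, (Fin (dm i) → ℝ) → Fin (dm (i + 1)) → ℝ)
    (hH0 : ∀ x j, H 0 x j = g 0 x j / (2 * K) + 1 / 2)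
    (hHmid : ∀ i, 1 ≤ i → i ≤ q - 1 → ∀ x j,
      H i x j = g i (fun k => 2 * K * x k - K) j / (2 * K) + 1 / 2)
    (hHq : ∀ x j, H q x j = g q (fun k => 2 * K * x k - K) j) :
    -- (a) the compositions agree on `[0,1]^{d_0}`
    (∀ x ∈ cube 0 1 (dm 0), compChain dm g q x = compChain dm H q x) ∧
    -- (b) `h_i` maps `[0,1]^{d_i}` into `[0,1]^{d_{i+1}}` for `i = 0, …, q−1`
    (∀ i < q, Set.MapsTo (H i) (cube 0 1 (dm i)) (cube 0 1 (dm (i + 1)))) ∧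
    -- (c) `h_{ij} ∈ C_{t_i}^{β_i}([0,1]^{d_i}, Q_i)`
    (∀ i ≤ q, ∀ j, memHolderClass (t i) (βs i)
      (if i = 0 then 1 else if i = q then (2 * Fb) ^ (βs q + 1) else (2 * Fb) ^ (βs i))
      0 1 fun x => H i x j) := by
  have h2K : (0:ℝ) < 2 * K := by linarith
  have hKFb : K ≤ Fb := le_trans (le_max_left K 1) hFb
  have h1Fb : (1:ℝ) ≤ Fb := le_trans (le_max_right K 1) hFb
  have h2F : (0:ℝ) < 2 * Fb := by linarith
  have h2K2F : 2 * K ≤ 2 * Fb := by linarith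
  -- composition invariant
  have hmid' : ∀ i, i ≤ q - 1 → ∀ x (j : Fin (dm (i + 1))),
      compChain dm H i x j = compChain dm g i x j / (2 * K) + 1 / 2 := by
    intro i
    induction i with
    | zero => intro _ x j; exact hH0 x j
    | succ i ih =>
      intro hi x j
      have hi' : i ≤ q - 1 := le_trans (Nat.le_succ i) hi
      show H (i + 1) (compChain dm H i x) j
        = g (i + 1) (compChain dm g i x) j / (2 * K) + 1 / 2
      rw [hHmid (i + 1) (Nat.succ_le_succ (Nat.zero_le i)) hi]
      have harg : (fun k => 2 * K * (compChain dm H i x k) - K) = compChain dm g i x := by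
        funext k
        rw [ih hi' x k]
        field_simp
        ring
      rw [harg]
  have parta : ∀ x ∈ cube 0 1 (dm 0), compChain dm g q x = compChain dm H q x := by
    intro x _
    obtain ⟨q', rfl⟩ : ∃ q', q = q' + 1 := ⟨q - 1, (Nat.succ_pred_eq_of_pos hq).symm⟩
    funext j
    show g (q' + 1) (compChain dm g q' x) j = H (q' + 1) (compChain dm H q' x) j
    rw [hHq (compChain dm H q' x) j]
    have harg : (fun k => 2 * K * (compChain dm H q' x k) - K) = compChain dm g q' x := by
      funext k
      rw [hmid' q' (by omega) x k]
      field_simp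
      ring
    rw [harg]
  -- sup bounds on g
  have habs0 : ∀ x ∈ cube 0 1 (dm 0), ∀ j, |g 0 x j| ≤ K := by
    intro x hx j
    have hg0 := hghol 0 (Nat.zero_le q) j
    rw [hl0, hu0] at hg0
    exact abs_le_of_memHolderClass (hβ 0 (Nat.zero_le q)) hg0 x hx
  have habsK : ∀ i, 1 ≤ i → i ≤ q → ∀ y ∈ cube (-K) K (dm i), ∀ j, |g i y j| ≤ K := by
    intro i h1 h2 y hy j
    exact abs_le_of_memHolderClass (hβ i h2) (hgholK i h1 h2 j) y hy
  have hIcc : ∀ s : ℝ, |s| ≤ K → s / (2 * K) + 1 / 2 ∈ Set.Icc (0:ℝ) 1 := by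
    intro s hs
    obtain ⟨hs1, hs2⟩ := abs_le.1 hs
    have e1 : s / (2 * K) + 1 / 2 = (s + K) / (2 * K) := by
      field_simp
    rw [Set.mem_Icc, e1]
    constructor
    · exact div_nonneg (by linarith) h2K.le
    · rw [div_le_one h2K]; linarith
  have hmapin : ∀ (d : ℕ) (x : Fin d → ℝ), x ∈ cube 0 1 d →
      (fun k => 2 * K * x k - K) ∈ cube (-K) K d := by
    intro d x hx k
    have h := hx k
    simp only [Set.mem_Icc] at h ⊢
    constructor <;> nlinarith [h.1, h.2]
  have partb : ∀ i < q, Set.MapsTo (H i) (cube 0 1 (dm i)) (cube 0 1 (dm (i + 1))) := by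
    intro i hiq x hx j
    rcases Nat.eq_zero_or_pos i with rfl | hipos
    · rw [hH0 x j]
      exact hIcc _ (habs0 x hx j)
    · rw [hHmid i hipos (Nat.le_pred_of_lt hiq) x j]
      exact hIcc _ (habsK i hipos (le_of_lt hiq) _ (hmapin _ x hx) j)
  refine ⟨parta, partb, ?_⟩
  -- part (c)
  intro i hi j
  have hβi := hβ i hi
  have hone_le : (1:ℝ) ≤ (2 * Fb) ^ (βs i) := by
    calc (1:ℝ) = (2 * Fb) ^ (0:ℝ) := (Real.rpow_zero _).symm
      _ ≤ (2 * Fb) ^ (βs i) :=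
        Real.rpow_le_rpow_of_exponent_le (by linarith) hβi.le
  have hcmp : (2 * K) ^ (βs i) ≤ (2 * Fb) ^ (βs i) :=
    Real.rpow_le_rpow h2K.le h2K2F hβi.le
  have hmaxle : max 1 ((2 * K) ^ (βs i)) ≤ (2 * Fb) ^ (βs i) := max_le hone_le hcmp
  rcases eq_or_ne i 0 with rfl | hne0
  · rw [if_pos rfl]
    have hg0 : memHolderClass (t 0) (βs 0) K 0 (1 + 0) (fun x => g 0 x j) := by
      rw [show (1:ℝ) + 0 = 1 from by norm_num]
      have hg0' := hghol 0 (Nat.zero_le q) j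
      rw [hl0, hu0] at hg0'
      exact hg0'
    have hren := memHolderClass_renorm (r := t 0) ((2 * K)⁻¹) (1 / 2) hβi one_pos hg0
    have hfun : (fun x => (2 * K)⁻¹ * (fun x => g 0 x j) (fun k => 1 * x k + 0) + 1 / 2)
        = fun x => H 0 x j := by
      funext x
      rw [hH0 x j]
      have : (fun k => 1 * x k + 0) = x := by funext k; ring
      rw [this]
      simp [div_eq_inv_mul]
    rw [hfun] at hren
    refine memHolderClass_mono ?_ hren
    rw [Real.one_rpow, max_self, abs_of_pos (inv_pos.2 h2K),
      abs_of_pos (by norm_num : (0:ℝ) < 1/2)]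
    have hhalf : (2 * K)⁻¹ * 1 * K = 1 / 2 := by field_simp
    rw [hhalf]
    norm_num
  · rcases eq_or_ne i q with rfl | hneq
    · rw [if_neg hne0, if_pos rfl]
      have hgq : memHolderClass (t i) (βs i) K (-K) (2 * K + -K) (fun x => g i x j) := by
        rw [show 2 * K + -K = K from by ring]
        exact hgholK i (Nat.one_le_iff_ne_zero.2 hne0) le_rfl j
      have hren := memHolderClass_renorm (r := t i) (1:ℝ) (0:ℝ) hβi h2K hgq
      have hfun : (fun x => (1:ℝ) * (fun x => g i x j) (fun k => 2 * K * x k + -K) + 0)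
          = fun x => H i x j := by
        funext x
        rw [hHq x j]
        have : (fun k => 2 * K * x k + -K) = (fun k => 2 * K * x k - K) := by
          funext k; ring
        rw [this]
        simp
      rw [hfun] at hren
      refine memHolderClass_mono ?_ hren
      rw [abs_of_nonneg (le_refl (0:ℝ)), abs_one, zero_add, one_mul,
        Real.rpow_add_one h2F.ne']
      exact mul_le_mul hmaxle (by linarith) hK.le (by positivity)
    · rw [if_neg hne0, if_neg hneq]
      have hgi : memHolderClass (t i) (βs i) K (-K) (2 * K + -K) (fun x => g i x j) := by
        rw [show 2 * K + -K = K from by ring]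
        exact hgholK i (Nat.one_le_iff_ne_zero.2 hne0) hi j
      have hren := memHolderClass_renorm (r := t i) ((2 * K)⁻¹) (1 / 2) hβi h2K hgi
      have hfun : (fun x => (2 * K)⁻¹ * (fun x => g i x j) (fun k => 2 * K * x k + -K) + 1 / 2)
          = fun x => H i x j := by
        funext x
        rw [hHmid i (Nat.one_le_iff_ne_zero.2 hne0)
          (Nat.le_pred_of_lt (lt_of_le_of_ne hi hneq)) x j]
        have : (fun k => 2 * K * x k + -K) = (fun k => 2 * K * x k - K) := by
          funext k; ring
        rw [this]
        simp [div_eq_inv_mul]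
      rw [hfun] at hren
      refine memHolderClass_mono ?_ hren
      rw [abs_of_pos (by norm_num : (0:ℝ) < 1/2), abs_of_pos (inv_pos.2 h2K)]
      have heq : (2 * K)⁻¹ * max 1 ((2 * K) ^ βs i) * K = max 1 ((2 * K) ^ βs i) / 2 := by
        field_simp
      rw [heq]
      linarith [hmaxle, hone_le]
end
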